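/- arXiv:1410.6339 — 8 statements merged into one kernel-verified Lean document; each statement's English description precedes it below -/
import Mathlib

section
/- Let q be a prime power with q > (r+d)·C(n, ⌊n/2⌋) (where C(n,m) denotes the binomial coefficient) and let r < k. If there exists a linear LRC over F_q with parameters (n, k, d, r, δ), then there exists a linear LRC over F_q with parameters (n+1, k+1, d, r+1, δ). -/
/-- A linear locally repairable code (LRC) over a finite field `F` with parameters
`(n, k, d, r, δ)`: a `k`-dimensional subspace `C ⊆ F^n` whose minimum Hamming distance
is exactly `d`, such that every coordinate `j` has a repair set `S` with `j ∈ S`,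
`|S| ≤ r + δ - 1`, and the projection of `C` to the coordinates in `S` has minimum
Hamming distance at least `δ`. -/
def IsLinearLRC (F : Type) [Field F] [Fintype F] [DecidableEq F]
    (n k d r δ : ℕ) : Prop :=
  ∃ C : Submodule F (Fin n → F),
    Module.finrank F ↥C = k ∧
    (∀ c ∈ C, c ≠ 0 → d ≤ hammingNorm c) ∧
    (∃ c ∈ C, c ≠ 0 ∧ hammingNorm c = d) ∧
    (∀ j : Fin n, ∃ S : Finset (Fin n), j ∈ S ∧ S.card ≤ r + δ - 1 ∧
      ∀ c ∈ C, ∀ c' ∈ C, (∃ i ∈ S, c i ≠ c' i) →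
        δ ≤ (S.filter (fun i => c i ≠ c' i)).card)

/-- The Singleton-type bound `d_opt(n,k,r,δ) = n - k - (⌈k/r⌉ - 1)(δ - 1) + 1`,
computed in `ℤ`, where `⌈k/r⌉ = (k + r - 1) / r`. -/
def doptZ (n k r δ : ℕ) : ℤ :=
  (n : ℤ) - k - ((((k + r - 1) / r : ℕ) : ℤ) - 1) * ((δ : ℤ) - 1) + 1

/-!
The new code is `{(c + a • x, a) : c ∈ C, a ∈ F}` for a suitable `x ∈ F^n`. A codeword with
`a ≠ 0` has, on `S` plus the new coordinate, weight `1 + #{i ∈ S | x i ≠ (-a⁻¹ • c) i}`. So the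
distance `d` survives if `x` is at distance at least `d - 1` from `C`, and the repair set `S j`
enlarged by the new coordinate keeps local distance `δ` if `x` is at distance at least `δ - 1`
from `C` on `S j`. If moreover `x` has no zero coordinate, a coordinate on which `C` vanishes
becomes a copy of the new one (up to a nonzero factor) and is repaired the same way.

A vector `x` that is too close to `C` on `S` agrees with a codeword on a subset `T ⊆ S` on which
one coordinate is determined by the others, and each such `T` rules out at most `q ^ (n - 1)`
vectors. Only `r + 1` sizes of `T` occur, so at most `(r + 1) * C(n, ⌊n/2⌋)` sets `T` are
involved, and the bound on `q` leaves a good `x`.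
-/

open Finset

section Combinatorics

variable {F : Type*} {n : ℕ}

def IsRepairSet [DecidableEq F] (C : Set (Fin n → F)) (S : Finset (Fin n)) (δ : ℕ) : Prop :=
  ∀ c ∈ C, ∀ c' ∈ C, (∃ i ∈ S, c i ≠ c' i) → δ ≤ #{i ∈ S | c i ≠ c' i}

def HasForcedCoord (C : Set (Fin n → F)) (T : Finset (Fin n)) : Prop :=
  ∃ t ∈ T, ∀ c ∈ C, ∀ c' ∈ C, (∀ i ∈ T.erase t, c i = c' i) → c t = c' t

theorem card_filter_le_pow_pred [Fintype F] (P : (Fin n → F) → Prop) [DecidablePred P] (t : Fin n)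
    (h : ∀ x y, P x → P y → (∀ i ≠ t, x i = y i) → x t = y t) :
    #{x | P x} ≤ Fintype.card F ^ (n - 1) := by
  have hcard : Fintype.card ({i : Fin n // i ≠ t} → F) = Fintype.card F ^ (n - 1) := by
    rw [Fintype.card_fun, Fintype.card_subtype_compl, Fintype.card_subtype_eq, Fintype.card_fin]
  rw [← hcard, ← card_univ]
  refine card_le_card_of_injOn (fun x i => x i.1) (fun _ _ => mem_coe.2 (mem_univ _)) ?_
  intro x hx y hy hxy
  simp only [coe_filter, mem_univ, true_and, Set.mem_ofPred_eq] at hx hy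
  funext i
  by_cases hi : i = t
  · subst hi
    exact h x y hx hy fun j hj => congrFun hxy ⟨j, hj⟩
  · exact congrFun hxy ⟨i, hi⟩

theorem card_filter_card_mem_le (K : Finset ℕ) :
    #{T : Finset (Fin n) | #T ∈ K} ≤ #K * n.choose (n / 2) :=
  calc #{T : Finset (Fin n) | #T ∈ K} ≤ #(K.biUnion fun m => powersetCard m univ) :=
        card_le_card fun T hT =>
          mem_biUnion.2 ⟨#T, (mem_filter.1 hT).2, mem_powersetCard.2 ⟨subset_univ _, rfl⟩⟩
    _ ≤ #K * n.choose (n / 2) :=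
        card_biUnion_le_card_mul _ _ _ fun m _ => by
          simpa using Nat.choose_le_middle m n

theorem exists_forall_ne_zero_avoid [Zero F] [Fintype F] (C : Set (Fin n → F))
    (𝒯 : Finset (Finset (Fin n))) (h𝒯 : ∀ T ∈ 𝒯, HasForcedCoord C T) (hn : 0 < n)
    (hq : n + #𝒯 < Fintype.card F) :
    ∃ x : Fin n → F, (∀ j, x j ≠ 0) ∧ ∀ T ∈ 𝒯, ∀ c ∈ C, ∃ i ∈ T, x i ≠ c i := by
  classical
  set q := Fintype.card F
  let Z : Finset (Fin n → F) := univ.biUnion fun j => {x | x j = 0}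
  let B : Finset (Fin n → F) := 𝒯.biUnion fun T => {x | ∃ c ∈ C, ∀ i ∈ T, x i = c i}
  have hZ : #Z ≤ n * q ^ (n - 1) := by
    simpa using card_biUnion_le_card_mul univ _ _ fun j _ =>
      card_filter_le_pow_pred _ j fun x y hx hy _ => hx.trans hy.symm
  have hB : #B ≤ #𝒯 * q ^ (n - 1) := card_biUnion_le_card_mul _ _ _ fun T hT => by
    obtain ⟨t, ht, hforced⟩ := h𝒯 T hT
    refine card_filter_le_pow_pred _ t ?_
    rintro x y ⟨c, hc, hxc⟩ ⟨c', hc', hyc⟩ hxy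
    rw [hxc t ht, hyc t ht]
    refine hforced c hc c' hc' fun i hi => ?_
    rw [← hxc i (mem_of_mem_erase hi), ← hyc i (mem_of_mem_erase hi), hxy i (ne_of_mem_erase hi)]
  obtain ⟨x, -, hx⟩ : ∃ x ∈ (univ : Finset (Fin n → F)), x ∉ Z ∪ B := by
    refine exists_mem_notMem_of_card_lt_card ?_
    calc #(Z ∪ B) ≤ #Z + #B := card_union_le _ _
      _ ≤ (n + #𝒯) * q ^ (n - 1) := by rw [add_mul]; exact add_le_add hZ hB
      _ < q * q ^ (n - 1) := Nat.mul_lt_mul_of_pos_right hq (by positivity)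
      _ = #univ := by
        rw [card_univ, Fintype.card_fun, Fintype.card_fin, ← pow_succ', Nat.sub_add_cancel hn]
  simp only [Z, B, mem_union, mem_biUnion, mem_filter, mem_univ, true_and, not_or,
    not_exists, not_and, not_forall] at hx
  exact ⟨x, hx.1, fun T hT c hc => by simpa using hx.2 T hT c hc⟩

variable [DecidableEq F] {C : Set (Fin n → F)} {S T : Finset (Fin n)} {δ : ℕ}

theorem IsRepairSet.hasForcedCoord (hS : IsRepairSet C S δ) (hTS : T ⊆ S) (hT : T.Nonempty)
    (hcard : #S + 1 < #T + δ) : HasForcedCoord C T := by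
  obtain ⟨t, ht⟩ := hT
  have hTS' := card_le_card hTS
  refine ⟨t, ht, fun c hc c' hc' hagree => ?_⟩
  by_contra hne
  have hdiff : {i ∈ S | c i ≠ c' i} ⊆ S \ T.erase t := fun i hi => by
    simp only [mem_filter, mem_sdiff] at hi ⊢
    exact ⟨hi.1, fun hiT => hi.2 (hagree i hiT)⟩
  have := (hS c hc c' hc' ⟨t, hTS ht, hne⟩).trans (card_le_card hdiff)
  rw [card_sdiff_of_subset ((erase_subset t T).trans hTS), card_erase_of_mem ht] at this
  omega

theorem IsRepairSet.le_card_filter_ne (hS : IsRepairSet C S δ) (hδ : δ ≤ #S + 1) {x : Fin n → F}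
    (hx : ∀ T, HasForcedCoord C T → #T = #S + 2 - δ → ∀ c ∈ C, ∃ i ∈ T, x i ≠ c i) :
    ∀ c ∈ C, δ - 1 ≤ #{i ∈ S | x i ≠ c i} := by
  intro c hc
  by_contra! hlt
  have hagree : #S + 2 - δ ≤ #{i ∈ S | x i = c i} := by
    have := card_filter_add_card_filter_not (s := S) (fun i => x i = c i)
    simp only [← ne_eq] at this
    omega
  obtain ⟨T, hTS, hT⟩ := exists_subset_card_eq hagree
  have hforced : HasForcedCoord C T :=
    hS.hasForcedCoord (hTS.trans (filter_subset _ _)) (card_pos.1 (by omega)) (by omega)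
  obtain ⟨i, hi, hne⟩ := hx T hforced hT c hc
  exact hne (mem_filter.1 (hTS hi)).2

theorem exists_forall_ne_zero_far [Zero F] [Fintype F] (C : Set (Fin n → F)) (K : Finset ℕ)
    (hn : 0 < n) (hq : n + #K * n.choose (n / 2) < Fintype.card F) :
    ∃ x : Fin n → F, (∀ j, x j ≠ 0) ∧ ∀ S δ, IsRepairSet C S δ → δ ≤ #S + 1 → #S + 2 - δ ∈ K →
      ∀ c ∈ C, δ - 1 ≤ #{i ∈ S | x i ≠ c i} := by
  classical
  have h𝒯 : #{T : Finset (Fin n) | HasForcedCoord C T ∧ #T ∈ K} ≤ #K * n.choose (n / 2) :=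
    (card_le_card (monotone_filter_right _ fun _ _ => And.right)).trans (card_filter_card_mem_le K)
  obtain ⟨x, hx0, hx⟩ := exists_forall_ne_zero_avoid C _ (fun T hT => (mem_filter.1 hT).2.1) hn
    (hq.trans_le' (Nat.add_le_add_left h𝒯 n))
  exact ⟨x, hx0, fun S δ hS hδ hK => hS.le_card_filter_ne hδ fun T hT hTcard =>
    hx T (by simp [hT, hTcard, hK])⟩

end Combinatorics

section Extension

variable {F : Type*} [Field F] {n : ℕ}

theorem card_filter_insert_map_castSucc (p : Fin (n + 1) → Prop) [DecidablePred p]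
    {S : Finset (Fin n)} {y : Fin (n + 1)} (hy : y ∉ S.map Fin.castSuccEmb) :
    #{i ∈ insert y (S.map Fin.castSuccEmb) | p i} =
      #{i ∈ S | p i.castSucc} + if p y then 1 else 0 := by
  rw [filter_insert]
  split_ifs
  · rw [card_insert_of_notMem fun h => hy (mem_of_mem_filter y h), filter_map, card_map]
    rfl
  · rw [filter_map, card_map]
    rfl

theorem card_insert_map_castSucc_le (y : Fin (n + 1)) (S : Finset (Fin n)) :
    #(insert y (S.map Fin.castSuccEmb)) ≤ #S + 1 :=
  (card_insert_le _ _).trans_eq (by rw [card_map])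

def extendMap (x : Fin n → F) : (Fin n → F) × F →ₗ[F] Fin (n + 1) → F where
  toFun p := Fin.snoc (p.1 + p.2 • x) p.2
  map_add' p p' := by
    ext i
    cases i using Fin.lastCases <;> simp [add_mul]
    ring
  map_smul' a p := by
    ext i
    cases i using Fin.lastCases <;> simp [mul_add, mul_assoc]

@[simp]
theorem extendMap_apply_castSucc (x : Fin n → F) (p : (Fin n → F) × F) (i : Fin n) :
    extendMap x p i.castSucc = p.1 i + p.2 * x i := by
  simp [extendMap]

@[simp]
theorem extendMap_apply_last (x : Fin n → F) (p : (Fin n → F) × F) :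
    extendMap x p (Fin.last n) = p.2 := by
  simp [extendMap]

theorem extendMap_injective (x : Fin n → F) : Function.Injective (extendMap x) := by
  rw [← LinearMap.ker_eq_bot, LinearMap.ker_eq_bot']
  intro p hp
  have ha : p.2 = 0 := by simpa using congrFun hp (Fin.last n)
  ext i
  · simpa [ha] using congrFun hp i.castSucc
  · exact ha

/-- The code spanned by `C × {0}` and `(x, 1)`. -/
def extendCode (C : Submodule F (Fin n → F)) (x : Fin n → F) : Submodule F (Fin (n + 1) → F) :=
  LinearMap.range ((extendMap x).comp (C.subtype.prodMap LinearMap.id))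

variable {C : Submodule F (Fin n → F)} {x : Fin n → F}

theorem mem_extendCode {w : Fin (n + 1) → F} :
    w ∈ extendCode C x ↔ ∃ c ∈ C, ∃ a, extendMap x (c, a) = w := by
  simp [extendCode]

theorem finrank_extendCode [FiniteDimensional F C] :
    Module.finrank F (extendCode C x) = Module.finrank F C + 1 := by
  rw [extendCode, LinearMap.finrank_range_of_inj, Module.finrank_prod, Module.finrank_self]
  exact (extendMap_injective x).comp (Prod.map_injective.2 ⟨Subtype.val_injective, fun _ _ h => h⟩)

variable [DecidableEq F]

theorem isRepairSet_iff {S : Finset (Fin n)} {δ : ℕ} :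
    IsRepairSet (C : Set (Fin n → F)) S δ ↔
      ∀ c ∈ C, (∃ i ∈ S, c i ≠ 0) → δ ≤ #{i ∈ S | c i ≠ 0} := by
  refine ⟨fun h c hc => h c hc 0 C.zero_mem, fun h c hc c' hc' => ?_⟩
  simpa only [Pi.sub_apply, sub_ne_zero] using h (c - c') (C.sub_mem hc hc')

theorem isRepairSet_univ_iff {d : ℕ} :
    IsRepairSet (C : Set (Fin n → F)) univ d ↔ ∀ c ∈ C, c ≠ 0 → d ≤ hammingNorm c := by
  simp only [isRepairSet_iff, mem_univ, true_and, ← Function.ne_iff]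
  rfl

theorem hammingNorm_extendMap_zero (c : Fin n → F) :
    hammingNorm (extendMap x (c, 0)) = hammingNorm c := by
  rw [hammingNorm, Fin.univ_castSuccEmb, cons_eq_insert,
    card_filter_insert_map_castSucc _ (by simp)]
  simp [hammingNorm]

variable {S : Finset (Fin n)} {δ : ℕ}

theorem IsRepairSet.extendCode_insert (hS : IsRepairSet (C : Set (Fin n → F)) S δ)
    (hx : ∀ c ∈ C, δ - 1 ≤ #{i ∈ S | x i ≠ c i}) {y : Fin (n + 1)}
    (hy : y ∉ S.map Fin.castSuccEmb) (hy0 : ∀ c ∈ C, ∀ a, extendMap x (c, a) y = 0 ↔ a = 0) :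
    IsRepairSet (extendCode C x : Set (Fin (n + 1) → F)) (insert y (S.map Fin.castSuccEmb)) δ := by
  rw [isRepairSet_iff] at hS ⊢
  intro w hw hne
  obtain ⟨c, hc, a, rfl⟩ := mem_extendCode.1 hw
  rw [card_filter_insert_map_castSucc _ hy]
  simp only [extendMap_apply_castSucc]
  by_cases ha : a = 0
  · subst ha
    have hc' : ∃ i ∈ S, c i ≠ 0 := by
      obtain ⟨i, hi, hi0⟩ := hne
      rcases mem_insert.1 hi with rfl | hi
      · exact absurd ((hy0 c hc 0).2 rfl) hi0
      · obtain ⟨i', hi', rfl⟩ := mem_map.1 hi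
        exact ⟨i', hi', by simpa using hi0⟩
    simpa using (hS c hc hc').trans (Nat.le_add_right _ _)
  · have hfar : {i ∈ S | c i + a * x i ≠ 0} = {i ∈ S | x i ≠ (-a⁻¹ • c) i} := by
      refine filter_congr fun i _ => not_congr ?_
      simp only [Pi.smul_apply, smul_eq_mul]
      constructor <;> intro h <;> field_simp at h ⊢ <;> linear_combination h
    have := hx _ (C.smul_mem (-a⁻¹) hc)
    rw [hfar, if_pos ((hy0 c hc a).not.2 ha)]
    omega

theorem IsRepairSet.extendCode_insert_last (hS : IsRepairSet (C : Set (Fin n → F)) S δ)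
    (hx : ∀ c ∈ C, δ - 1 ≤ #{i ∈ S | x i ≠ c i}) :
    IsRepairSet (extendCode C x : Set (Fin (n + 1) → F))
      (insert (Fin.last n) (S.map Fin.castSuccEmb)) δ :=
  hS.extendCode_insert hx (by simp [Fin.castSucc_ne_last]) fun c _ a => by simp

theorem IsRepairSet.exists_extendCode_castSucc (hS : IsRepairSet (C : Set (Fin n → F)) S δ)
    (hx : ∀ c ∈ C, δ - 1 ≤ #{i ∈ S | x i ≠ c i}) {j : Fin n} (hxj : x j ≠ 0)
    (hj : j ∈ S ∨ ∀ c ∈ C, c j = 0) :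
    ∃ S' : Finset (Fin (n + 1)), j.castSucc ∈ S' ∧ #S' ≤ #S + 1 ∧
      IsRepairSet (extendCode C x : Set (Fin (n + 1) → F)) S' δ := by
  by_cases hjS : j ∈ S
  · exact ⟨_, mem_insert_of_mem (mem_map_of_mem _ hjS), card_insert_map_castSucc_le _ _,
      hS.extendCode_insert_last hx⟩
  · have hdead := hj.resolve_left hjS
    refine ⟨_, mem_insert_self _ _, card_insert_map_castSucc_le _ _, hS.extendCode_insert hx ?_ ?_⟩
    · simpa using hjS
    · intro c hc a
      simp [hdead c hc, hxj]

end Extension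

theorem isLinearLRC_extendCode {F : Type} [Field F] [Fintype F] [DecidableEq F] {n k d r δ : ℕ}
    (C : Submodule F (Fin n → F)) (hk : Module.finrank F C = k)
    (hd : ∀ c ∈ C, c ≠ 0 → d ≤ hammingNorm c) (hw : ∃ c ∈ C, c ≠ 0 ∧ hammingNorm c = d)
    (S : Fin n → Finset (Fin n)) (hjS : ∀ j, j ∈ S j) (hScard : ∀ j, #(S j) ≤ r + δ - 1)
    (hSloc : ∀ j, IsRepairSet (C : Set (Fin n → F)) (S j) δ)
    (x : Fin n → F) (hx0 : ∀ j, x j ≠ 0) (hxd : ∀ c ∈ C, d - 1 ≤ #{i | x i ≠ c i})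
    (hxS : ∀ j, (∃ c ∈ C, c j ≠ 0) → ∀ c ∈ C, δ - 1 ≤ #{i ∈ S j | x i ≠ c i}) :
    IsLinearLRC F (n + 1) (k + 1) d (r + 1) δ := by
  obtain ⟨w, hwC, hw0, hwd⟩ := hw
  obtain ⟨j0, hj0⟩ := Function.ne_iff.mp hw0
  have hlive : ∃ c ∈ C, c j0 ≠ 0 := ⟨w, hwC, hj0⟩
  refine ⟨extendCode C x, by rw [finrank_extendCode, hk], ?_, ⟨extendMap x (w, 0),
    mem_extendCode.2 ⟨w, hwC, 0, rfl⟩, (map_ne_zero_iff _ (extendMap_injective x)).2 (by simpa),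
    by rw [hammingNorm_extendMap_zero, hwd]⟩, fun j' => ?_⟩
  · rw [← isRepairSet_univ_iff, Fin.univ_castSuccEmb, cons_eq_insert]
    exact (isRepairSet_univ_iff.2 hd).extendCode_insert_last hxd
  obtain ⟨j0', S', hj', hS'card, hS'⟩ : ∃ j0', ∃ S', j' ∈ S' ∧ #S' ≤ #(S j0') + 1 ∧
      IsRepairSet (extendCode C x : Set (Fin (n + 1) → F)) S' δ := by
    cases j' using Fin.lastCases with
    | last => exact ⟨j0, _, mem_insert_self _ _, card_insert_map_castSucc_le _ _,
        (hSloc j0).extendCode_insert_last (hxS j0 hlive)⟩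
    | cast j =>
      by_cases hj : ∃ c ∈ C, c j ≠ 0
      · exact ⟨j, (hSloc j).exists_extendCode_castSucc (hxS j hj) (hx0 j) (.inl (hjS j))⟩
      · push Not at hj
        exact ⟨j0, (hSloc j0).exists_extendCode_castSucc (hxS j0 hlive) (hx0 j) (.inr hj)⟩
  exact ⟨S', hj', by have := hScard j0'; have := card_pos.2 ⟨j0', hjS j0'⟩; omega, hS'⟩

theorem stmt_1_general (F : Type) [Field F] [Fintype F] [DecidableEq F]
    (n k d r δ : ℕ) (hδ : 2 ≤ δ)
    (hq : (r + d) * Nat.choose n (n / 2) < Fintype.card F)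
    (h : IsLinearLRC F n k d r δ) :
    IsLinearLRC F (n + 1) (k + 1) d (r + 1) δ := by
  obtain ⟨C, hk, hd, ⟨w, hwC, hw0, hwd⟩, hloc⟩ := h
  choose S hjS hScard hSloc using hloc
  obtain ⟨j0, hj0⟩ := Function.ne_iff.mp hw0
  have hδS : ∀ j, ∀ c ∈ C, c j ≠ 0 → δ ≤ #(S j) := fun j c hc hcj =>
    (isRepairSet_iff.1 (hSloc j) c hc ⟨j, hjS j, hcj⟩).trans (card_filter_le _ _)
  have hδd : δ ≤ d := hwd ▸ (isRepairSet_iff.1 (hSloc j0) w hwC ⟨j0, hjS j0, hj0⟩).trans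
    (card_le_card (filter_subset_filter _ (subset_univ _)))
  have hdn : d ≤ n := hwd ▸ hammingNorm_le_card_fintype.trans_eq (Fintype.card_fin n)
  set K := Icc 2 (r + 1) ∪ {n + 2 - d}
  have hK : n + #K * n.choose (n / 2) < Fintype.card F := by
    have hKcard : #K ≤ r + 1 := (card_union_le _ _).trans (by simp)
    have hn := Nat.choose_le_middle 1 n
    rw [Nat.choose_one_right] at hn
    calc n + #K * n.choose (n / 2) ≤ (r + d) * n.choose (n / 2) := by nlinarith
      _ < Fintype.card F := hq
  obtain ⟨x, hx0, hx⟩ := exists_forall_ne_zero_far (C : Set (Fin n → F)) K j0.pos hK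
  refine isLinearLRC_extendCode C hk hd ⟨w, hwC, hw0, hwd⟩ S hjS hScard hSloc x hx0
    (hx _ _ (isRepairSet_univ_iff.2 hd) (by rw [card_univ, Fintype.card_fin]; omega) (by simp [K])) fun j ⟨c, hc, hcj⟩ => ?_
  have := hδS j c hc hcj
  exact hx _ _ (hSloc j) (by omega) (by simp only [K, mem_union, mem_Icc]; have := hScard j; omega)

theorem stmt_1 (F : Type) [Field F] [Fintype F] [DecidableEq F]
    (n k d r δ : ℕ) (hr : 1 ≤ r) (hδ : 2 ≤ δ) (hrk : r < k)
    (hq : (r + d) * Nat.choose n (n / 2) < Fintype.card F)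
    (h : IsLinearLRC F n k d r δ) :
    IsLinearLRC F (n + 1) (k + 1) d (r + 1) δ :=
  stmt_1_general F n k d r δ hδ hq h
end

section
/- Suppose there exists a linear LRC over F_q with parameters (n, k, d, r, δ) and k ≥ 2. Then there exists a linear LRC over F_q of length n−1, dimension k−1, minimum Hamming distance d' ≥ d, and all-symbol (r, δ)-locality. -/
theorem stmt_3 (F : Type) [Field F] [Fintype F] [DecidableEq F]
    (n k d r δ : ℕ) (hr : 1 ≤ r) (hδ : 2 ≤ δ) (hk : 2 ≤ k)
    (h : IsLinearLRC F n k d r δ) :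
    ∃ d' : ℕ, d ≤ d' ∧ IsLinearLRC F (n - 1) (k - 1) d' r δ := by
  obtain ⟨C, hdim, hlb, ⟨c0, hc0C, hc0ne, hc0d⟩, hloc⟩ := h
  have hn : 1 ≤ n := by
    rcases Nat.eq_zero_or_pos n with rfl | h1
    · exact absurd (funext fun i => i.elim0) hc0ne
    · exact h1
  obtain ⟨m, rfl⟩ : ∃ m, n = m + 1 := ⟨n - 1, (Nat.succ_pred_eq_of_pos hn).symm⟩
  obtain ⟨j, hj⟩ : ∃ j, c0 j ≠ 0 := Function.ne_iff.mp hc0ne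
  -- the subcode vanishing at j
  set K : Submodule F (Fin (m+1) → F) := LinearMap.ker (LinearMap.proj j) with hK
  set f : ↥C →ₗ[F] F := (LinearMap.proj (R := F) (φ := fun _ : Fin (m+1) => F) j).comp C.subtype with hf
  have hfsurj : Function.Surjective f := by
    intro a
    refine ⟨⟨(a * (c0 j)⁻¹) • c0, C.smul_mem _ hc0C⟩, ?_⟩
    simp [hf, LinearMap.proj_apply, mul_assoc, inv_mul_cancel₀ hj]
  have hkerf : Module.finrank F ↥(LinearMap.ker f) = k - 1 := by
    have h1 := LinearMap.finrank_range_add_finrank_ker f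
    rw [hdim, LinearMap.range_eq_top.mpr hfsurj, finrank_top, Module.finrank_self] at h1
    omega
  have hDker : Submodule.comap C.subtype (C ⊓ K) = LinearMap.ker f := by
    ext x
    simp [hf, hK, Submodule.mem_comap, Submodule.mem_inf, x.2]
  have hDdim : Module.finrank F ↥(C ⊓ K) = k - 1 := by
    rw [← hkerf, ← hDker]
    exact (Submodule.comapSubtypeEquivOfLe inf_le_left).finrank_eq.symm
  -- puncture map
  set φ : (Fin (m+1) → F) →ₗ[F] (Fin m → F) := LinearMap.funLeft F F j.succAbove with hφ
  set g : ↥(C ⊓ K) →ₗ[F] (Fin m → F) := φ.comp (C ⊓ K).subtype with hg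
  have hxj : ∀ x : ↥(C ⊓ K), (x : Fin (m+1) → F) j = 0 := fun x =>
    (Submodule.mem_inf.mp x.2).2
  have hginj : Function.Injective g := by
    rw [← LinearMap.ker_eq_bot]
    ext x
    simp only [LinearMap.mem_ker, Submodule.mem_bot]
    constructor
    · intro hx
      apply Subtype.ext
      funext z
      rcases eq_or_ne z j with rfl | hz
      · exact hxj x
      · obtain ⟨i, rfl⟩ := Fin.exists_succAbove_eq hz
        have := congrFun hx i
        simpa [hg, hφ] using this
    · rintro rfl; simp
  set C' : Submodule F (Fin m → F) := LinearMap.range g with hC'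
  have hC'dim : Module.finrank F ↥C' = k - 1 := by
    have h1 := LinearMap.finrank_range_add_finrank_ker g
    rw [LinearMap.ker_eq_bot.mpr hginj, hDdim, finrank_bot, ← hC'] at h1
    omega
  -- norms don't decrease
  have hnorm : ∀ x : ↥(C ⊓ K), hammingNorm (x : Fin (m+1) → F) ≤ hammingNorm (g x) := by
    intro x
    have hsub : (Finset.univ.filter (fun z => (x : Fin (m+1) → F) z ≠ 0)) ⊆
        (Finset.univ.filter (fun i => g x i ≠ 0)).image j.succAbove := by
      intro z hz
      simp only [Finset.mem_filter, Finset.mem_univ, true_and] at hz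
      have hzj : z ≠ j := fun hzj => hz (hzj ▸ hxj x)
      obtain ⟨i, rfl⟩ := Fin.exists_succAbove_eq hzj
      refine Finset.mem_image.mpr ⟨i, ?_, rfl⟩
      simp only [Finset.mem_filter, Finset.mem_univ, true_and, hg, hφ]
      simpa [LinearMap.funLeft_apply] using hz
    calc hammingNorm (x : Fin (m+1) → F)
        ≤ ((Finset.univ.filter (fun i => g x i ≠ 0)).image j.succAbove).card :=
          Finset.card_le_card hsub
      _ ≤ (Finset.univ.filter (fun i => g x i ≠ 0)).card := Finset.card_image_le
      _ = hammingNorm (g x) := rfl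
  -- nonzero codeword exists in C'
  have hC'ne : ∃ c ∈ C', c ≠ (0 : Fin m → F) := by
    by_contra hc
    push_neg at hc
    have : C' = ⊥ := by
      rw [Submodule.eq_bot_iff]; exact hc
    rw [Submodule.finrank_eq_zero.mpr this] at hC'dim
    omega
  set T : Set ℕ := {t | ∃ c ∈ C', c ≠ (0 : Fin m → F) ∧ hammingNorm c = t} with hT
  have hTne : T.Nonempty := by
    obtain ⟨c, hc, hcne⟩ := hC'ne
    exact ⟨hammingNorm c, c, hc, hcne, rfl⟩
  have hdle : ∀ t ∈ T, d ≤ t := by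
    rintro t ⟨c, hc, hcne, rfl⟩
    obtain ⟨x, rfl⟩ := hc
    have hxne : x ≠ 0 := fun hx => hcne (by rw [hx, map_zero])
    have hx1 : (x : Fin (m+1) → F) ≠ 0 := fun hx => hxne (Subtype.ext hx)
    exact le_trans (hlb _ (Submodule.mem_inf.mp x.2).1 hx1) (hnorm x)
  refine ⟨sInf T, le_csInf hTne hdle, C', hC'dim, ?_, ?_, ?_⟩
  · rintro c hc hcne
    exact Nat.sInf_le ⟨c, hc, hcne, rfl⟩
  · obtain ⟨c, hc, hcne, hceq⟩ := Nat.sInf_mem hTne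
    exact ⟨c, hc, hcne, hceq⟩
  · intro i
    obtain ⟨S, hzS, hcard, hS⟩ := hloc (j.succAbove i)
    refine ⟨Finset.univ.filter (fun i' => j.succAbove i' ∈ S), by simpa using hzS, ?_, ?_⟩
    · calc (Finset.univ.filter (fun i' => j.succAbove i' ∈ S)).card
          ≤ S.card := Finset.card_le_card_of_injOn j.succAbove
            (fun i' hi' => by simpa using hi')
            (Fin.succAbove_right_injective.injOn)
        _ ≤ r + δ - 1 := hcard
    · rintro c hc c' hc' ⟨i', hi'S, hi'ne⟩
      obtain ⟨x, rfl⟩ := hc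
      obtain ⟨y, rfl⟩ := hc'
      simp only [Finset.mem_filter, Finset.mem_univ, true_and] at hi'S
      have hdiff : ∃ w ∈ S, (x : Fin (m+1) → F) w ≠ (y : Fin (m+1) → F) w := by
        refine ⟨j.succAbove i', hi'S, ?_⟩
        simpa [hg, hφ, LinearMap.funLeft_apply] using hi'ne
      have h1 := hS _ (Submodule.mem_inf.mp x.2).1 _ (Submodule.mem_inf.mp y.2).1 hdiff
      refine le_trans h1 ?_
      have hsub : (S.filter (fun w => (x : Fin (m+1) → F) w ≠ (y : Fin (m+1) → F) w)) ⊆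
          ((Finset.univ.filter (fun i' => j.succAbove i' ∈ S)).filter
            (fun i' => g x i' ≠ g y i')).image j.succAbove := by
        intro w hw
        simp only [Finset.mem_filter] at hw
        have hwj : w ≠ j := by
          intro hwj; subst hwj; exact hw.2 (by rw [hxj x, hxj y])
        obtain ⟨i'', rfl⟩ := Fin.exists_succAbove_eq hwj
        refine Finset.mem_image.mpr ⟨i'', ?_, rfl⟩
        simp only [Finset.mem_filter, Finset.mem_univ, true_and]
        refine ⟨hw.1, ?_⟩
        simpa [hg, hφ, LinearMap.funLeft_apply] using hw.2
      calc (S.filter (fun w => (x : Fin (m+1) → F) w ≠ (y : Fin (m+1) → F) w)).card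
          ≤ _ := Finset.card_le_card hsub
        _ ≤ _ := Finset.card_image_le
end

section
/- Suppose k ≥ 2, r does not divide k−1, and there exists an optimal linear LRC over F_q with parameters (n, k, d, r, δ). Then there exists an optimal linear LRC over F_q with parameters (n−1, k−1, d, r, δ). -/
/-!
Let `v` be a codeword of minimum weight `d`. If `dim C ≥ 2`, some coordinate `j` has `v j = 0`
while `C` is not identically zero at `j`: otherwise a codeword outside `F ∙ v` could be reduced
against `v` at a coordinate of its support to a nonzero codeword of weight `< d`. Shortening `C`
at `j` (keeping the codewords vanishing at `j`, then deleting coordinate `j`) lowers the dimension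
by exactly one, keeps all weights (so `v` still attains `d`) and restricts each repair set to a
repair set. Finally `r ∤ k - 1` gives `⌈(k - 1)/r⌉ = ⌈k/r⌉`, so `d_opt` is unchanged.
-/

open Module

namespace Fin

variable {m : ℕ}

lemma card_filter_preimage_succAbove (j : Fin (m + 1)) (S : Finset (Fin (m + 1)))
    (p : Fin (m + 1) → Prop) [DecidablePred p] (hj : ¬ p j) :
    ((S.preimage j.succAbove succAbove_right_injective.injOn).filter
      fun l => p (j.succAbove l)).card = (S.filter p).card := by
  classical
  have hrange : ∀ i ∈ S.filter p, i ∈ Set.range j.succAbove := fun i hi =>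
    exists_succAbove_eq fun hij => hj (hij ▸ (Finset.mem_filter.1 hi).2)
  rw [← Finset.filter_true_of_mem hrange,
    ← Finset.card_preimage _ _ succAbove_right_injective.injOn]
  congr 1
  ext l
  simp [and_comm]

lemma hammingNorm_comp_succAbove {β : Type*} [Zero β] [DecidableEq β] {j : Fin (m + 1)}
    {c : Fin (m + 1) → β} (hc : c j = 0) : hammingNorm (c ∘ j.succAbove) = hammingNorm c := by
  simpa [hammingNorm] using card_filter_preimage_succAbove j Finset.univ (c · ≠ 0) (by simpa)

end Fin

lemma hammingNorm_lt_of_apply_eq_zero {ι β : Type*} [Fintype ι] [Zero β] [DecidableEq β]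
    {v w : ι → β} (hvw : ∀ l, v l = 0 → w l = 0) {i : ι} (hvi : v i ≠ 0) (hwi : w i = 0) :
    hammingNorm w < hammingNorm v := by
  refine Finset.card_lt_card ⟨fun l hl => ?_, fun hsub => ?_⟩
  · simp only [Finset.mem_filter, Finset.mem_univ, true_and] at hl ⊢
    exact fun hvl => hl (hvw l hvl)
  · simpa [hwi] using hsub (Finset.mem_filter.2 ⟨Finset.mem_univ i, hvi⟩)

lemma Submodule.exists_apply_eq_zero_of_min_weight {ι F : Type*} [Fintype ι] [Field F]
    [DecidableEq F] {C : Submodule F (ι → F)} (hC : 2 ≤ finrank F C) {v : ι → F} (hv : v ∈ C)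
    (hv0 : v ≠ 0) (hmin : ∀ c ∈ C, c ≠ 0 → hammingNorm v ≤ hammingNorm c) :
    ∃ j, v j = 0 ∧ ∃ c ∈ C, c j ≠ 0 := by
  by_contra! hcover
  obtain ⟨c, hc, hc_span⟩ : ∃ c ∈ C, c ∉ span F {v} := SetLike.not_le_iff_exists.1 fun hle => by
    have := Submodule.finrank_mono hle
    rw [finrank_span_singleton hv0] at this
    omega
  obtain ⟨i, hvi⟩ : ∃ i, v i ≠ 0 := Function.ne_iff.1 hv0
  set w := c - (c i / v i) • v
  have hw : w ∈ C := C.sub_mem hc (C.smul_mem _ hv)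
  have hw0 : w ≠ 0 := fun h0 =>
    hc_span (sub_eq_zero.1 h0 ▸ Submodule.smul_mem _ _ (Submodule.mem_span_singleton_self v))
  have hwi : w i = 0 := by simp [w, hvi]
  exact (hmin w hw hw0).not_gt
    (hammingNorm_lt_of_apply_eq_zero (fun l hl => hcover l hl w hw) hvi hwi)

section Shortening

variable {F : Type*} [Field F]

lemma Submodule.finrank_inf_ker_add_one {V : Type*} [AddCommGroup V] [Module F V]
    [FiniteDimensional F V] (C : Submodule F V) {φ : Dual F V} (hφ : ¬ C ≤ LinearMap.ker φ) :
    finrank F ↥(C ⊓ LinearMap.ker φ) + 1 = finrank F C := by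
  have hφC : φ.domRestrict C ≠ 0 := fun h0 =>
    hφ fun c hc => by simpa using LinearMap.congr_fun h0 ⟨c, hc⟩
  rw [← Dual.finrank_ker_add_one_of_ne_zero hφC, LinearMap.ker_domRestrict,
    ← Submodule.map_comap_subtype, Submodule.finrank_map_subtype_eq]

lemma Submodule.finrank_map_of_disjoint_ker {V W : Type*} [AddCommGroup V] [Module F V]
    [AddCommGroup W] [Module F W] {D : Submodule F V} {f : V →ₗ[F] W}
    (h : Disjoint D (LinearMap.ker f)) : finrank F ↥(D.map f) = finrank F D := by
  rw [← LinearMap.range_domRestrict,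
    LinearMap.finrank_range_of_inj (LinearMap.injective_domRestrict_iff.2 h)]

variable {m : ℕ}

def Submodule.shorten (C : Submodule F (Fin (m + 1) → F)) (j : Fin (m + 1)) :
    Submodule F (Fin m → F) :=
  (C ⊓ LinearMap.ker (LinearMap.proj j)).map (LinearMap.funLeft F F j.succAbove)

lemma Submodule.mem_shorten {C : Submodule F (Fin (m + 1) → F)} {j : Fin (m + 1)}
    {x : Fin m → F} : x ∈ C.shorten j ↔ ∃ c ∈ C, c j = 0 ∧ c ∘ j.succAbove = x := by
  simp only [Submodule.shorten, Submodule.mem_map, Submodule.mem_inf, LinearMap.mem_ker,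
    LinearMap.proj_apply, and_assoc]
  rfl

lemma Fin.disjoint_ker_proj_ker_funLeft_succAbove (j : Fin (m + 1)) :
    Disjoint (LinearMap.ker (LinearMap.proj j : (Fin (m + 1) → F) →ₗ[F] F))
      (LinearMap.ker (LinearMap.funLeft F F j.succAbove)) := by
  refine LinearMap.disjoint_ker.2 fun c hcj hc => funext fun i => ?_
  rcases j.eq_self_or_eq_succAbove i with rfl | ⟨l, rfl⟩
  · simpa using hcj
  · exact congr_fun hc l

lemma Submodule.finrank_shorten_add_one {C : Submodule F (Fin (m + 1) → F)} {j : Fin (m + 1)}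
    (hj : ∃ c ∈ C, c j ≠ 0) : finrank F (C.shorten j) + 1 = finrank F C := by
  obtain ⟨c, hc, hcj⟩ := hj
  rw [Submodule.shorten, Submodule.finrank_map_of_disjoint_ker
    (j.disjoint_ker_proj_ker_funLeft_succAbove.mono_left inf_le_right)]
  exact C.finrank_inf_ker_add_one fun hle => hcj (hle hc)

lemma Submodule.shorten_repair [DecidableEq F] {δ : ℕ}
    {C : Submodule F (Fin (m + 1) → F)} {j : Fin (m + 1)} {S : Finset (Fin (m + 1))}
    (hS : ∀ c ∈ C, ∀ c' ∈ C, (∃ i ∈ S, c i ≠ c' i) → δ ≤ (S.filter fun i => c i ≠ c' i).card) :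
    ∀ x ∈ C.shorten j, ∀ x' ∈ C.shorten j,
      (∃ l ∈ S.preimage j.succAbove Fin.succAbove_right_injective.injOn, x l ≠ x' l) →
        δ ≤ ((S.preimage j.succAbove Fin.succAbove_right_injective.injOn).filter
          fun l => x l ≠ x' l).card := by
  rintro _ hx _ hx' ⟨l, hl, hne⟩
  obtain ⟨c, hc, hcj, rfl⟩ := Submodule.mem_shorten.1 hx
  obtain ⟨c', hc', hcj', rfl⟩ := Submodule.mem_shorten.1 hx'
  exact (hS c hc c' hc' ⟨_, Finset.mem_preimage.1 hl, hne⟩).trans_eq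
    (Fin.card_filter_preimage_succAbove j S (fun i => c i ≠ c' i) (by simp [hcj, hcj'])).symm

end Shortening

variable {F : Type} [Field F] [Fintype F] [DecidableEq F]

theorem IsLinearLRC.le_length {n k d r δ : ℕ} (h : IsLinearLRC F n k d r δ) : k ≤ n := by
  obtain ⟨C, rfl, -⟩ := h
  simpa using C.finrank_le

theorem IsLinearLRC.shorten {m k d r δ : ℕ} (h : IsLinearLRC F (m + 1) k d r δ) (hk : 2 ≤ k) :
    IsLinearLRC F m (k - 1) d r δ := by
  obtain ⟨C, hrank, hmin, ⟨v, hv, hv0, hvd⟩, hloc⟩ := h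
  obtain ⟨j, hvj, hj⟩ := C.exists_apply_eq_zero_of_min_weight (hrank ▸ hk) hv hv0
    fun c hc hc0 => hvd ▸ hmin c hc hc0
  refine ⟨C.shorten j, ?_, ?_, ⟨v ∘ j.succAbove, Submodule.mem_shorten.2 ⟨v, hv, hvj, rfl⟩, ?_, ?_⟩,
    fun j' => ?_⟩
  · have := Submodule.finrank_shorten_add_one hj
    omega
  · intro x hx hx0
    obtain ⟨c, hc, hcj, rfl⟩ := Submodule.mem_shorten.1 hx
    rw [Fin.hammingNorm_comp_succAbove hcj]
    exact hmin c hc fun hc0 => hx0 (by simp [hc0])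
  · rw [← hammingNorm_ne_zero_iff, Fin.hammingNorm_comp_succAbove hvj]
    exact hammingNorm_ne_zero_iff.2 hv0
  · rw [Fin.hammingNorm_comp_succAbove hvj, hvd]
  · obtain ⟨S, hjS, hScard, hS⟩ := hloc (j.succAbove j')
    refine ⟨S.preimage j.succAbove Fin.succAbove_right_injective.injOn, by simpa using hjS,
      ?_, Submodule.shorten_repair hS⟩
    classical
    exact (Finset.card_preimage _ _ _).trans_le ((Finset.card_filter_le _ _).trans hScard)

lemma Nat.add_sub_one_div_eq_of_not_dvd {a r : ℕ} (h : ¬ r ∣ a) :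
    (a + 1 + r - 1) / r = (a + r - 1) / r := by
  rcases r with _ | r
  · simp
  · rw [show a + 1 + (r + 1) - 1 = a + r + 1 by omega, show a + (r + 1) - 1 = a + r by omega]
    exact Nat.succ_div_of_not_dvd (by simpa [add_assoc] using h)

lemma doptZ_pred_pred {n k r δ : ℕ} (hn : 1 ≤ n) (hk : 1 ≤ k) (h : ¬ r ∣ k - 1) :
    doptZ (n - 1) (k - 1) r δ = doptZ n k r δ := by
  obtain ⟨a, rfl⟩ : ∃ a, k = a + 1 := ⟨k - 1, by omega⟩
  simp only [doptZ, Nat.add_sub_cancel] at h ⊢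
  rw [Nat.add_sub_one_div_eq_of_not_dvd h]
  push_cast [hn]
  ring

theorem stmt_4_general (F : Type) [Field F] [Fintype F] [DecidableEq F]
    (n k d r δ : ℕ) (hk : 2 ≤ k)
    (hdvd : ¬ r ∣ (k - 1))
    (h : IsLinearLRC F n k d r δ) (hopt : (d : ℤ) = doptZ n k r δ) :
    IsLinearLRC F (n - 1) (k - 1) d r δ ∧ (d : ℤ) = doptZ (n - 1) (k - 1) r δ := by
  have hkn := h.le_length
  obtain ⟨m, rfl⟩ : ∃ m, n = m + 1 := ⟨n - 1, by omega⟩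
  exact ⟨h.shorten hk, hopt.trans (doptZ_pred_pred (by omega) (by omega) hdvd).symm⟩

theorem stmt_4 (F : Type) [Field F] [Fintype F] [DecidableEq F]
    (n k d r δ : ℕ) (hr : 1 ≤ r) (hδ : 2 ≤ δ) (hk : 2 ≤ k)
    (hdvd : ¬ r ∣ (k - 1))
    (h : IsLinearLRC F n k d r δ) (hopt : (d : ℤ) = doptZ n k r δ) :
    IsLinearLRC F (n - 1) (k - 1) d r δ ∧ (d : ℤ) = doptZ (n - 1) (k - 1) r δ :=
  stmt_4_general F n k d r δ hk hdvd h hopt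
end

section
/- Let δ ≥ 2, r ≥ 1, and suppose n = a(r+δ−1) for a positive integer a and r < k ≤ n − a(δ−1). Then for every prime power q > (rδ)^{r·4^r} · C(n + (rδ)^{(r−1)·4^r}, k−1), there exists an optimal linear LRC over F_q with parameters (n, k, d, r, δ), i.e., one with minimum distance d = n − k − (⌈k/r⌉ − 1)(δ−1) + 1. -/
/-!
The code is a Tamo–Barg code over a monic polynomial `f`, of degree `r + 1` or `r + δ - 1`, that
is constant on `a` disjoint sets `f⁻¹(y)` of size `deg f`. A message `v ∈ F^k` gives the
polynomial `g_v = ∑ᵢ vᵢ X^(i % r) f^(i / r)`, and its code word at a point `(y, x)` is `g_v(x)`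
with `f` replaced by the constant `y`. The coordinates form `a` groups
`{y} × (f⁻¹(y) ∪ extra points)` of size `r + δ - 1`; on each group the code word is the evaluation
of a local polynomial of degree `< r`, which is the locality.

Such an `f` exists by pigeonhole on the coefficients of the polynomials `∏_{x ∈ S} (X - x)` as soon
as `q` is large compared with `a · (deg f)!`. For `n < 3k` we have `r + δ - 1 < 3r`, and
`deg f = r + δ - 1` leaves no room for extra points. Otherwise `deg f = r + 1`, and the extra points
are added greedily: a new point avoids the roots of one local polynomial for each of the at most
`2 C(n, k - 1)` sets of fewer than `k` earlier points, and so cuts the kernel of each such set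
unless its local polynomial vanishes there.

For a nonzero message, its zeros at fibre points are roots of `g_v`, which bounds the dimension of
the messages vanishing there; each further zero in a group with nonzero local polynomial cuts one
more dimension; and each group where the local polynomial vanishes puts `deg f` roots into `g_v`,
so there are at most `⌈k/r⌉ - 1` such groups. This gives distance `d_opt`, attained by a message
vanishing on `⌈k/r⌉ - 1` whole groups and at `(k - 1) % r` further points.
-/

open Polynomial Finset Module
open scoped Nat

theorem Nat.self_le_choose {m j : ℕ} (hj : 1 ≤ j) (hjm : j < m) : m ≤ m.choose j := by
  induction m with
  | zero => omega
  | succ m ih =>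
    obtain ⟨i, rfl⟩ : ∃ i, j = i + 1 := ⟨j - 1, by omega⟩
    rw [Nat.choose_succ_succ']
    rcases Nat.lt_or_ge (i + 1) m with h | h
    · have := ih h
      have := Nat.choose_pos (show i ≤ m by omega)
      omega
    · obtain rfl : m = i + 1 := by omega
      simp

theorem Nat.two_mul_choose_le_choose_succ {n t : ℕ} (h : 3 * t + 2 ≤ n) :
    2 * n.choose t ≤ n.choose (t + 1) := by
  refine Nat.le_of_mul_le_mul_right ?_ (Nat.succ_pos t)
  rw [Nat.choose_succ_right_eq]
  calc 2 * n.choose t * (t + 1) = n.choose t * (2 * (t + 1)) := by ring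
    _ ≤ n.choose t * (n - t) := Nat.mul_le_mul_left _ (by omega)

theorem Nat.sum_range_choose_le_two_mul {n t : ℕ} (h : 3 * t ≤ n) :
    ∑ j ∈ range (t + 1), n.choose j ≤ 2 * n.choose t := by
  induction t with
  | zero => simp
  | succ t ih =>
    rw [sum_range_succ]
    have := Nat.two_mul_choose_le_choose_succ (n := n) (t := t) (by omega)
    have := ih (by omega)
    omega

theorem Nat.pow_le_two_mul_sub_pow {q d : ℕ} (h : 2 * d * d ≤ q) : q ^ d ≤ 2 * (q - d) ^ d := by
  rcases Nat.eq_zero_or_pos d with rfl | hd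
  · simp
  have hdq : d ≤ q := by nlinarith
  have bernoulli := pow_add_mul_le_add_pow (a := (q : ℤ)) (b := -(d : ℤ)) (by positivity)
    (by omega) d
  rw [← sub_eq_add_neg] at bernoulli
  have hq : (q : ℤ) ^ d = q * q ^ (d - 1) := by
    rw [← _root_.pow_succ', Nat.sub_add_cancel hd]
  have hsq : 2 * (d : ℤ) * d * q ^ (d - 1) ≤ q * q ^ (d - 1) :=
    mul_le_mul_of_nonneg_right (by exact_mod_cast h) (by positivity)
  zify [hdq]
  linarith

theorem Nat.mul_pow_le_choose {q d a : ℕ} (hd : 1 ≤ d) (hq : 2 * d * d ≤ q)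
    (ha : 2 * d ! * a ≤ q) : a * q ^ (d - 1) ≤ q.choose d := by
  have hlow : q ^ d ≤ 2 * (d ! * q.choose d) :=
    calc q ^ d ≤ 2 * (q - d) ^ d := Nat.pow_le_two_mul_sub_pow hq
      _ ≤ 2 * (q + 1 - d) ^ d := by gcongr; omega
      _ ≤ 2 * q.descFactorial d := by gcongr; exact Nat.pow_sub_le_descFactorial q d
      _ = 2 * (d ! * q.choose d) := by rw [Nat.descFactorial_eq_factorial_mul_choose]
  have hup : 2 * d ! * (a * q ^ (d - 1)) ≤ q ^ d :=
    calc 2 * d ! * (a * q ^ (d - 1)) = (2 * d ! * a) * q ^ (d - 1) := by ring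
      _ ≤ q * q ^ (d - 1) := Nat.mul_le_mul_right _ ha
      _ = q ^ d := by rw [← _root_.pow_succ', Nat.sub_add_cancel hd]
  refine Nat.le_of_mul_le_mul_left ?_ (by positivity : 0 < 2 * d !)
  linarith

theorem Nat.mod_add_div_mul_injective {r d : ℕ} (hr : 0 < r) (hrd : r ≤ d) :
    Function.Injective fun i => i % r + i / r * d := by
  intro i j hij
  have hlt (i : ℕ) : i % r < d := (Nat.mod_lt _ hr).trans_le hrd
  have hdiv (i : ℕ) : (i % r + i / r * d) / d = i / r := by
    rw [Nat.add_mul_div_right _ _ (hr.trans_le hrd), Nat.div_eq_of_lt (hlt i), zero_add]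
  have hmod (i : ℕ) : (i % r + i / r * d) % d = i % r := by
    rw [Nat.add_mul_mod_self_right, Nat.mod_eq_of_lt (hlt i)]
  simp only at hij
  have h₁ : i / r = j / r := by rw [← hdiv i, ← hdiv j, hij]
  have h₂ : i % r = j % r := by rw [← hmod i, ← hmod j, hij]
  rw [← Nat.div_add_mod i r, ← Nat.div_add_mod j r, h₁, h₂]

theorem Nat.mod_add_div_mul_le {i m r d : ℕ} (hrd : r ≤ d) (him : i ≤ m) :
    i % r + i / r * d ≤ i + m / r * (d - r) := by
  have e₁ : i / r * d = i / r * r + i / r * (d - r) := by rw [← mul_add, Nat.add_sub_cancel' hrd]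
  have e₂ := Nat.div_add_mod i r
  have e₃ : i / r * (d - r) ≤ m / r * (d - r) := Nat.mul_le_mul_right _ (Nat.div_le_div_right him)
  nlinarith

theorem card_filter_fst_mem {α β : Type*} [DecidableEq α] {S : Finset (α × β)} {G : Finset α}
    {c : ℕ} (h : ∀ y ∈ G, #{p ∈ S | p.1 = y} = c) : #{p ∈ S | p.1 ∈ G} = #G * c := by
  rw [card_eq_sum_card_fiberwise (f := Prod.fst) (s := {p ∈ S | p.1 ∈ G}) (t := G)
    fun p hp => (mem_filter.mp hp).2, ← smul_eq_mul, ← sum_const]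
  refine sum_congr rfl fun y hy => ?_
  rw [filter_filter, ← h y hy]
  exact congrArg card (filter_congr fun p _ => ⟨And.right, fun h => ⟨h ▸ hy, h⟩⟩)

theorem card_filter_equiv {α : Type*} {P : Finset α} {n : ℕ} (e : Fin n ≃ P) (Q : α → Prop)
    [DecidablePred Q] : #{j | Q (e j)} = #{p ∈ P | Q p} := by
  rw [card_equiv e (t := {x : P | Q x}) (by simp), ← card_map (Function.Embedding.subtype _)]
  congr 1
  ext p
  simp [and_comm]

theorem Polynomial.Monic.eq_add_C_of_coeff_eq {R : Type*} [Ring R] {p q : R[X]} (hp : p.Monic)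
    (hq : q.Monic) (hpq : p.natDegree = q.natDegree)
    (h : ∀ j, 0 < j → j < p.natDegree → p.coeff j = q.coeff j) :
    p = q + C (p.coeff 0 - q.coeff 0) := by
  ext j
  rcases Nat.eq_zero_or_pos j with rfl | hj
  · simp
  rw [coeff_add, coeff_C, if_neg hj.ne', add_zero]
  rcases lt_trichotomy j p.natDegree with hjd | rfl | hjd
  · exact h j hj hjd
  · rw [hp.coeff_natDegree, hpq, hq.coeff_natDegree]
  · rw [coeff_eq_zero_of_natDegree_lt hjd, coeff_eq_zero_of_natDegree_lt (hpq ▸ hjd)]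

theorem exists_monic_card_fiber_eq {F : Type*} [Field F] [Fintype F] [DecidableEq F] {d a : ℕ}
    (ha : 0 < a) (h : a * Fintype.card F ^ (d - 1) ≤ (Fintype.card F).choose d) :
    ∃ f : F[X], f.Monic ∧ f.natDegree = d ∧
      ∃ Y : Finset F, #Y = a ∧ ∀ y ∈ Y, #{x | f.eval x = y} = d := by
  let pS : Finset F → F[X] := fun S => ∏ x ∈ S, (X - C x)
  have pS_monic (S) : (pS S).Monic := monic_prod_of_monic _ _ fun x _ => monic_X_sub_C x
  have pS_natDegree (S) : (pS S).natDegree = #S := natDegree_finsetProd_X_sub_C_eq_card S id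
  -- Pigeonhole: `a` of the sets `S`, `#S = d`, give the same coefficients of `X ^ j`, `0 < j < d`;
  -- their products `∏ x ∈ S, (X - x)` then differ by constants.
  obtain ⟨κ, -, hκ⟩ := exists_le_card_fiber_of_mul_le_card_of_maps_to
    (s := powersetCard d (univ : Finset F)) (t := (univ : Finset (Fin (d - 1) → F)))
    (f := fun S j => (pS S).coeff (j + 1)) (fun _ _ => mem_univ _) univ_nonempty
    (by simpa [card_powersetCard, Fintype.card_fun, mul_comm] using h)
  set 𝒮 := {S ∈ powersetCard d (univ : Finset F) |
    (fun j : Fin (d - 1) => (pS S).coeff (j + 1)) = κ}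
  have card_of_mem {S} (hS : S ∈ 𝒮) : #S = d := (mem_powersetCard.mp (mem_filter.mp hS).1).2
  obtain ⟨S₀, hS₀⟩ : 𝒮.Nonempty := card_pos.mp (by omega)
  set f := pS S₀
  have hfd : f.natDegree = d := by rw [pS_natDegree, card_of_mem hS₀]
  let c : Finset F → F := fun S => f.coeff 0 - (pS S).coeff 0
  have fiber_eq {S} (hS : S ∈ 𝒮) : ({x | f.eval x = c S} : Finset F) = S := by
    have hf : f = pS S + C (c S) := by
      refine (pS_monic S₀).eq_add_C_of_coeff_eq (pS_monic S) (by rw [hfd, pS_natDegree,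
        card_of_mem hS]) fun j hj hjd => ?_
      have hjd' : j < d := hfd ▸ hjd
      have := congrFun ((mem_filter.mp hS₀).2.trans (mem_filter.mp hS).2.symm) ⟨j - 1, by omega⟩
      simpa [Nat.sub_add_cancel hj] using this
    ext x
    simp [hf, pS, eval_prod, prod_eq_zero_iff, sub_eq_zero]
  obtain ⟨𝒮', h𝒮', hcard⟩ := exists_subset_card_eq (show a ≤ #𝒮 by simpa using hκ)
  refine ⟨f, pS_monic S₀, hfd, 𝒮'.image c, ?_, ?_⟩
  · rw [card_image_of_injOn, hcard]
    intro S hS S' hS' hSS'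
    rw [← fiber_eq (h𝒮' hS), ← fiber_eq (h𝒮' hS')]
    simp only [hSS']
  · simp only [mem_image]
    rintro _ ⟨S, hS, rfl⟩
    rw [fiber_eq (h𝒮' hS), card_of_mem (h𝒮' hS)]

section Kernels

variable {K V ι : Type*} [Field K] [AddCommGroup V] [Module K V] [FiniteDimensional K V]

theorem exists_subset_iInf_ker_eq [DecidableEq ι] (f : ι → Module.Dual K V) (T : Finset ι) :
    ∃ s ⊆ T, ⨅ i ∈ s, LinearMap.ker (f i) = ⨅ i ∈ T, LinearMap.ker (f i) ∧
      #s + finrank K ↥(⨅ i ∈ T, LinearMap.ker (f i)) ≤ finrank K V := by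
  induction T using Finset.induction_on with
  | empty => exact ⟨∅, subset_rfl, rfl, by simpa using Submodule.finrank_le _⟩
  | insert i T _ ih =>
    obtain ⟨s, hsT, hs, hcard⟩ := ih
    rw [Finset.iInf_insert]
    by_cases hle : ⨅ j ∈ T, LinearMap.ker (f j) ≤ LinearMap.ker (f i)
    · refine ⟨s, hsT.trans (subset_insert i T), ?_, ?_⟩ <;> rw [inf_eq_right.mpr hle]
      exacts [hs, hcard]
    · refine ⟨insert i s, insert_subset_insert i hsT, by rw [Finset.iInf_insert, hs], ?_⟩
      have hlt := Submodule.finrank_lt_finrank_of_lt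
        (inf_le_right.lt_of_ne fun h => hle (h ▸ inf_le_left) :
          LinearMap.ker (f i) ⊓ ⨅ j ∈ T, LinearMap.ker (f j) < ⨅ j ∈ T, LinearMap.ker (f j))
      have := card_insert_le i s
      omega

theorem exists_ne_zero_forall_eq_zero (f : ι → Module.Dual K V) (T : Finset ι)
    (hT : #T < finrank K V) : ∃ v ≠ 0, ∀ i ∈ T, f i v = 0 := by
  obtain ⟨v, hv, hv0⟩ := (Submodule.ne_bot_iff _).mp (LinearMap.ker_ne_bot_of_finrank_lt
    (f := (LinearMap.pi fun i : T => f i : V →ₗ[K] T → K)) (by simpa using hT))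
  exact ⟨v, hv0, fun i hi => congrFun (LinearMap.mem_ker.mp hv) ⟨i, hi⟩⟩

end Kernels

section EncPoly

variable {F : Type*} [Field F] (r : ℕ) {k : ℕ}

noncomputable def encPoly (f : F[X]) : (Fin k → F) →ₗ[F] F[X] :=
  Fintype.linearCombination F fun i : Fin k => X ^ ((i : ℕ) % r) * f ^ ((i : ℕ) / r)

theorem encPoly_apply (f : F[X]) (v : Fin k → F) :
    encPoly r f v = ∑ i, v i • (X ^ ((i : ℕ) % r) * f ^ ((i : ℕ) / r)) :=
  Fintype.linearCombination_apply _ _ _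

theorem eval_encPoly (f : F[X]) (v : Fin k → F) (x : F) :
    (encPoly r f v).eval x = (encPoly r (C (f.eval x)) v).eval x := by
  simp [encPoly_apply, eval_finsetSum]

theorem degree_encPoly_lt {f : F[X]} {v : Fin k → F} {z : ℕ}
    (h : ∀ i, v i ≠ 0 → (i : ℕ) % r + (i : ℕ) / r * f.natDegree < z) :
    (encPoly r f v).degree < z := by
  rw [← mem_degreeLT, encPoly_apply]
  refine Submodule.sum_mem _ fun i _ => ?_
  by_cases hi : v i = 0
  · simp [hi]
  refine Submodule.smul_mem _ _ (mem_degreeLT.mpr (degree_le_natDegree.trans_lt ?_))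
  exact_mod_cast (natDegree_mul_le.trans
    (add_le_add (natDegree_X_pow_le _) natDegree_pow_le)).trans_lt (h i hi)

theorem degree_encPoly_C_lt (hr : 0 < r) (y : F) (v : Fin k → F) :
    (encPoly r (C y) v).degree < r :=
  degree_encPoly_lt r fun i _ => by simpa using Nat.mod_lt _ hr

theorem encPoly_ne_zero {f : F[X]} (hf : f.Monic) (hr : 0 < r) (hrf : r ≤ f.natDegree)
    {v : Fin k → F} (hv : v ≠ 0) : encPoly r f v ≠ 0 := by
  set b : Fin k → F[X] := fun i => X ^ ((i : ℕ) % r) * f ^ ((i : ℕ) / r)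
  have hbm (i) : (b i).Monic := (monic_X_pow _).mul (hf.pow _)
  have hb (i) : (b i).natDegree = (i : ℕ) % r + (i : ℕ) / r * f.natDegree := by
    rw [(monic_X_pow _).natDegree_mul (hf.pow _), natDegree_X_pow, hf.natDegree_pow, mul_comm]
  have hb_inj : Function.Injective fun i => (b i).natDegree := by
    simp only [hb]
    exact (Nat.mod_add_div_mul_injective hr hrf).comp Fin.val_injective
  have hdeg (i) (hi : v i ≠ 0) : (v i • b i).degree = (b i).natDegree := by
    rw [smul_eq_C_mul, degree_C_mul hi, degree_eq_natDegree (hbm i).ne_zero]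
  have hsum : (encPoly r f v).degree = univ.sup fun i => (v i • b i).degree := by
    rw [encPoly_apply]
    refine degree_sum_eq_of_disjoint _ _ ?_
    rintro i ⟨-, hi⟩ j ⟨-, hj⟩ hij
    have hi' : v i ≠ 0 := fun h => hi (by simp [h])
    have hj' : v j ≠ 0 := fun h => hj (by simp [h])
    change (v i • b i).degree ≠ (v j • b j).degree
    rw [hdeg i hi', hdeg j hj']
    exact_mod_cast fun h => hij (hb_inj h)
  obtain ⟨i, hi⟩ := Function.ne_iff.mp hv
  intro h0
  have := Finset.le_sup (f := fun i => (v i • b i).degree) (mem_univ i)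
  rw [← hsum, h0, degree_zero, hdeg i hi] at this
  exact absurd this (by simp)

theorem finrank_iInf_ker_eval_encPoly_le {f : F[X]} (hf : f.Monic) (hr : 0 < r)
    (hrf : r ≤ f.natDegree) (R : Finset F) :
    finrank F ↥(⨅ x ∈ R, LinearMap.ker (leval x ∘ₗ encPoly (k := k) r f)) ≤
      k + (k - 1) / r * (f.natDegree - r) - #R := by
  set W := ⨅ x ∈ R, LinearMap.ker (leval x ∘ₗ encPoly (k := k) r f)
  set high : Finset (Fin k) := {i | #R ≤ (i : ℕ) % r + (i : ℕ) / r * f.natDegree}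
  -- `w ∈ W` vanishing on `high` makes `encPoly r f w` of degree `< #R`, with `#R` roots.
  have hinj : Function.Injective
      (LinearMap.funLeft F F (Subtype.val : high → Fin k) ∘ₗ W.subtype) := by
    rw [← LinearMap.ker_eq_bot, LinearMap.ker_eq_bot']
    rintro ⟨w, hw⟩ hw0
    have hlow (i : Fin k) (hi : w i ≠ 0) : (i : ℕ) % r + (i : ℕ) / r * f.natDegree < #R :=
      not_le.mp fun h => hi (congrFun hw0 ⟨i, mem_filter.mpr ⟨mem_univ _, h⟩⟩)
    have hzero : encPoly r f w = 0 := by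
      refine eq_zero_of_degree_lt_of_eval_finset_eq_zero R (degree_encPoly_lt r hlow) ?_
      simpa [W, Submodule.mem_iInf] using hw
    by_contra hne
    exact encPoly_ne_zero r hf hr hrf (fun h => hne (by simp [h])) hzero
  have hhigh : #high ≤ k - (#R - (k - 1) / r * (f.natDegree - r)) :=
    calc #high = #(high.map Fin.valEmbedding) := (card_map _).symm
      _ ≤ #(Ico (#R - (k - 1) / r * (f.natDegree - r)) k) := card_le_card fun i hi => by
        obtain ⟨i, hiH, rfl⟩ := mem_map.mp hi
        have := Nat.mod_add_div_mul_le (d := f.natDegree) hrf (Nat.le_sub_one_of_lt i.isLt)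
        have := (mem_filter.mp hiH).2
        exact mem_Ico.mpr ⟨by simp only [Fin.valEmbedding_apply]; omega, i.isLt⟩
      _ = _ := Nat.card_Ico _ _
  calc finrank F W ≤ finrank F (high → F) := LinearMap.finrank_le_finrank_of_injective hinj
    _ = #high := by simp
    _ ≤ _ := by omega

end EncPoly

section PairCode

variable {F : Type*} [Field F]

-- The code word of `v` at `(y, x)`: `encPoly r f v` at `x`, with `f` replaced by the value `y`.
-- At a fibre point `f.eval x = y` this is `(encPoly r f v).eval x` (`eval_encPoly`).
noncomputable def pairEval (r k : ℕ) (p : F × F) : Module.Dual F (Fin k → F) :=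
  leval p.2 ∘ₗ encPoly r (C p.1)

noncomputable def pairKernel (r k : ℕ) (s : Finset (F × F)) : Submodule F (Fin k → F) :=
  ⨅ p ∈ s, LinearMap.ker (pairEval r k p)

variable {r k : ℕ}

theorem pairEval_apply (p : F × F) (v : Fin k → F) :
    pairEval r k p v = (encPoly r (C p.1) v).eval p.2 := rfl

theorem mem_pairKernel {s : Finset (F × F)} {v : Fin k → F} :
    v ∈ pairKernel r k s ↔ ∀ p ∈ s, pairEval r k p v = 0 := by
  simp [pairKernel, Submodule.mem_iInf]

theorem pairKernel_anti {s t : Finset (F × F)} (h : s ⊆ t) :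
    pairKernel r k t ≤ pairKernel r k s :=
  fun _ hv => mem_pairKernel.mpr fun p hp => mem_pairKernel.mp hv p (h hp)

theorem natDegree_encPoly_C_le (hr : 0 < r) (y : F) (v : Fin k → F) :
    (encPoly r (C y) v).natDegree ≤ r - 1 := by
  by_cases h : encPoly r (C y) v = 0
  · simp [h]
  have := (natDegree_lt_iff_degree_lt h).mpr (degree_encPoly_C_lt r hr y v)
  omega

theorem card_filter_eval_eq_zero_le [DecidableEq F] {p : F[X]} (hp : p ≠ 0) (s : Finset F) :
    #{x ∈ s | p.eval x = 0} ≤ p.natDegree :=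
  card_le_degree_of_subset_roots fun _ hx => (mem_roots hp).mpr (mem_filter.mp hx).2

theorem card_group_pairEval_eq_zero_le [DecidableEq F] (hr : 0 < r) (P : Finset (F × F)) {y : F}
    {v : Fin k → F} (hv : encPoly r (C y) v ≠ 0) :
    #{p ∈ P | p.1 = y ∧ pairEval r k p v = 0} ≤ r - 1 := by
  set Z := {p ∈ P | p.1 = y ∧ pairEval r k p v = 0}
  have hinj : Set.InjOn Prod.snd (Z : Set (F × F)) := fun p hp p' hp' h =>
    Prod.ext (((mem_filter.mp hp).2.1).trans (mem_filter.mp hp').2.1.symm) h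
  calc #Z = #(Z.image Prod.snd) := (card_image_of_injOn hinj).symm
    _ ≤ (encPoly r (C y) v).natDegree := by
      refine card_le_degree_of_subset_roots fun x hx => (mem_roots hv).mpr ?_
      obtain ⟨p, hp, rfl⟩ := mem_image.mp hx
      obtain ⟨-, rfl, hp0⟩ := mem_filter.mp hp
      exact hp0
    _ ≤ r - 1 := natDegree_encPoly_C_le hr y v

variable [DecidableEq F]

-- General position of the new point `p` over `P`: a zero at `p` of a message whose local
-- polynomial at `p.1` is nonzero costs one dimension (`finrank_pairKernel_insert_lt`).
def CutsPairKernels (r k : ℕ) (P : Finset (F × F)) (p : F × F) : Prop :=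
  ∀ s ⊆ P, #s < k → ¬pairKernel r k s ≤ LinearMap.ker (encPoly r (C p.1)) →
    ¬pairKernel r k s ≤ LinearMap.ker (pairEval r k p)

theorem CutsPairKernels.finrank_pairKernel_insert_lt {P S : Finset (F × F)} {p : F × F}
    (hp : CutsPairKernels r k P p) (hS : S ⊆ P) {v : Fin k → F} (hv : v ≠ 0)
    (hvS : v ∈ pairKernel r k S) (hlive : encPoly r (C p.1) v ≠ 0) :
    finrank F (pairKernel r k (insert p S)) < finrank F (pairKernel r k S) := by
  obtain ⟨s, hsS, hsK, hscard⟩ := exists_subset_iInf_ker_eq (pairEval r k) S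
  change pairKernel r k s = pairKernel r k S at hsK
  change #s + finrank F (pairKernel r k S) ≤ finrank F (Fin k → F) at hscard
  have hpos : 1 ≤ finrank F (pairKernel r k S) :=
    Submodule.one_le_finrank_iff.mpr ((Submodule.ne_bot_iff _).mpr ⟨v, hvS, hv⟩)
  have hcut : ¬pairKernel r k S ≤ LinearMap.ker (pairEval r k p) := by
    rw [← hsK]
    refine hp s (hsS.trans hS) ?_ fun hle => hlive (hle (hsK ▸ hvS))
    rw [finrank_fin_fun] at hscard
    omega
  rw [pairKernel, Finset.iInf_insert]
  exact Submodule.finrank_lt_finrank_of_lt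
    (inf_le_right.lt_of_ne fun h => hcut (h.symm.trans_le inf_le_left))

inductive IsGenericExtension (r k : ℕ) (B : Finset (F × F)) : Finset (F × F) → Prop
  | refl : IsGenericExtension r k B B
  | extend {P : Finset (F × F)} {p : F × F} : IsGenericExtension r k B P → p ∉ P →
      CutsPairKernels r k P p → IsGenericExtension r k B (insert p P)

namespace IsGenericExtension

variable {B P : Finset (F × F)}

theorem subset (h : IsGenericExtension r k B P) : B ⊆ P := by
  induction h with
  | refl => exact subset_rfl
  | extend _ _ _ ih => exact ih.trans (subset_insert _ _)

theorem finrank_pairKernel_union_add_card_le (h : IsGenericExtension r k B P)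
    {T E : Finset (F × F)} (hT : T ⊆ B) (hE : E ⊆ P) (hEB : Disjoint E B) {v : Fin k → F}
    (hv : v ≠ 0) (hvE : v ∈ pairKernel r k (T ∪ E))
    (hlive : ∀ p ∈ E, encPoly r (C p.1) v ≠ 0) :
    finrank F (pairKernel r k (T ∪ E)) + #E ≤ finrank F (pairKernel r k T) := by
  induction h generalizing E with
  | refl =>
    obtain rfl : E = ∅ :=
      subset_empty.mp fun p hp => (disjoint_left.mp hEB hp (hE hp)).elim
    rw [union_empty, card_empty, add_zero]
  | @extend P p hP hp hgen ih =>
    by_cases hpE : p ∈ E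
    swap
    · exact ih (fun q hq => (mem_insert.mp (hE hq)).resolve_left fun h => hpE (h ▸ hq))
        hEB hvE hlive
    set E' := E.erase p
    have hE' : E' ⊆ P := fun q hq =>
      (mem_insert.mp (hE (mem_of_mem_erase hq))).resolve_left (ne_of_mem_erase hq)
    have hvE' : v ∈ pairKernel r k (T ∪ E') :=
      pairKernel_anti (union_subset_union subset_rfl (erase_subset p E)) hvE
    have ih' := ih hE' (disjoint_of_subset_left (erase_subset p E) hEB) hvE'
      fun q hq => hlive q (mem_of_mem_erase hq)
    have hlt := hgen.finrank_pairKernel_insert_lt (union_subset (hT.trans hP.subset) hE') hv hvE'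
      (hlive p hpE)
    rw [← union_insert, insert_erase hpE] at hlt
    have hcardE : #E' + 1 = #E := card_erase_add_one hpE
    omega

end IsGenericExtension

end PairCode

section Distance

variable {F : Type*} [Field F] [Fintype F] [DecidableEq F] {r k : ℕ}

def fiberPairs (f : F[X]) (Y : Finset F) : Finset (F × F) :=
  {p ∈ Y ×ˢ univ | f.eval p.2 = p.1}

theorem mem_fiberPairs {f : F[X]} {Y : Finset F} {p : F × F} :
    p ∈ fiberPairs f Y ↔ p.1 ∈ Y ∧ f.eval p.2 = p.1 := by
  simp [fiberPairs]

theorem card_fiberPairs_group {f : F[X]} {Y : Finset F} {y : F} (hy : y ∈ Y) :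
    #{p ∈ fiberPairs f Y | p.1 = y} = #{x | f.eval x = y} := by
  have : {p ∈ fiberPairs f Y | p.1 = y} =
      ({x | f.eval x = y} : Finset F).map ⟨Prod.mk y, Prod.mk_right_injective y⟩ := by
    ext ⟨y', x⟩
    simp only [mem_filter, mem_fiberPairs, mem_map, mem_univ, true_and,
      Function.Embedding.coeFn_mk, Prod.mk.injEq]
    constructor
    · rintro ⟨⟨-, hx⟩, rfl⟩
      exact ⟨x, hx, rfl, rfl⟩
    · rintro ⟨x, hx, rfl, rfl⟩
      exact ⟨⟨hy, hx⟩, rfl⟩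
  rw [this, card_map]

theorem finrank_pairKernel_le_of_subset_fiberPairs {f : F[X]} {Y : Finset F} (hf : f.Monic)
    (hr : 0 < r) (hrf : r ≤ f.natDegree) {T : Finset (F × F)} (hT : T ⊆ fiberPairs f Y) :
    finrank F (pairKernel r k T) ≤ k + (k - 1) / r * (f.natDegree - r) - #T := by
  have hfT (p) (hp : p ∈ T) : f.eval p.2 = p.1 := (mem_fiberPairs.mp (hT hp)).2
  have hinj : Set.InjOn Prod.snd (T : Set (F × F)) := fun p hp p' hp' h =>
    Prod.ext ((hfT p hp).symm.trans (h ▸ hfT p' hp')) h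
  have hle : pairKernel r k T ≤ ⨅ x ∈ T.image Prod.snd, LinearMap.ker (leval x ∘ₗ encPoly r f) := by
    intro v hv
    simp only [Submodule.mem_iInf, mem_image, LinearMap.mem_ker]
    rintro x ⟨p, hp, rfl⟩
    rw [LinearMap.comp_apply, leval_apply, eval_encPoly, hfT p hp]
    exact mem_pairKernel.mp hv p hp
  calc finrank F (pairKernel r k T)
      ≤ finrank F ↥(⨅ x ∈ T.image Prod.snd, LinearMap.ker (leval x ∘ₗ encPoly (k := k) r f)) :=
        Submodule.finrank_mono hle
    _ ≤ _ := finrank_iInf_ker_eval_encPoly_le r hf hr hrf _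
    _ = _ := by rw [card_image_of_injOn hinj]

variable {f : F[X]} {Y : Finset F} {P : Finset (F × F)} {D : ℕ}

theorem IsGenericExtension.card_inter_add_card_sdiff_le
    (hgen : IsGenericExtension r k (fiberPairs f Y) P)
    (hf : f.Monic) (hr : 0 < r) (hrf : r ≤ f.natDegree) {v : Fin k → F} (hv : v ≠ 0) :
    #({p ∈ P | pairEval r k p v = 0} ∩ fiberPairs f Y) +
      #{p ∈ {p ∈ P | pairEval r k p v = 0} \ fiberPairs f Y | encPoly r (C p.1) v ≠ 0} ≤
      k - 1 + (k - 1) / r * (f.natDegree - r) := by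
  set Z := {p ∈ P | pairEval r k p v = 0}
  set E := {p ∈ Z \ fiberPairs f Y | encPoly r (C p.1) v ≠ 0}
  have hvE : v ∈ pairKernel r k (Z ∩ fiberPairs f Y ∪ E) := mem_pairKernel.mpr fun p hp => by
    rcases mem_union.mp hp with hp | hp
    exacts [(mem_filter.mp (mem_inter.mp hp).1).2,
      (mem_filter.mp (mem_sdiff.mp (mem_filter.mp hp).1).1).2]
  have hchain : finrank F (pairKernel r k (Z ∩ fiberPairs f Y ∪ E)) + #E ≤
      finrank F (pairKernel r k (Z ∩ fiberPairs f Y)) :=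
    hgen.finrank_pairKernel_union_add_card_le inter_subset_right
      (fun p hp => (mem_filter.mp (mem_sdiff.mp (mem_filter.mp hp).1).1).1)
      (disjoint_left.mpr fun p hp => (mem_sdiff.mp (mem_filter.mp hp).1).2) hv hvE
      fun p hp => (mem_filter.mp hp).2
  have hfib := finrank_pairKernel_le_of_subset_fiberPairs (k := k) (T := Z ∩ fiberPairs f Y)
    hf hr hrf inter_subset_right
  have hpos : 1 ≤ finrank F (pairKernel r k (Z ∩ fiberPairs f Y ∪ E)) :=
    Submodule.one_le_finrank_iff.mpr ((Submodule.ne_bot_iff _).mpr ⟨v, hvE, hv⟩)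
  omega

theorem card_group_sdiff_fiberPairs (hfib : ∀ y ∈ Y, #{x | f.eval x = y} = f.natDegree)
    (hBP : fiberPairs f Y ⊆ P) (hPD : ∀ y ∈ Y, #{p ∈ P | p.1 = y} = D) {y : F} (hy : y ∈ Y) :
    #{p ∈ P \ fiberPairs f Y | p.1 = y} = D - f.natDegree := by
  have : {p ∈ P \ fiberPairs f Y | p.1 = y} =
      {p ∈ P | p.1 = y} \ {p ∈ fiberPairs f Y | p.1 = y} := by
    ext p
    simp only [mem_filter, mem_sdiff]
    tauto
  rw [this, card_sdiff_of_subset (filter_subset_filter _ hBP), hPD y hy, card_fiberPairs_group hy,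
    hfib y hy]

theorem card_pairEval_eq_zero_le (hf : f.Monic) (hr : 0 < r) (hrf : r ≤ f.natDegree)
    (hfib : ∀ y ∈ Y, #{x | f.eval x = y} = f.natDegree)
    (hgen : IsGenericExtension r k (fiberPairs f Y) P) (hPY : ∀ p ∈ P, p.1 ∈ Y)
    (hPD : ∀ y ∈ Y, #{p ∈ P | p.1 = y} = D) (hdD : f.natDegree ≤ D) {v : Fin k → F}
    (hv : v ≠ 0) :
    #{p ∈ P | pairEval r k p v = 0} ≤ k - 1 + (k - 1) / r * (D - r) := by
  set B := fiberPairs f Y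
  set G := {y ∈ Y | encPoly r (C y) v = 0}
  -- Zeros at fibre points and at extra points of live groups (`E`) are bounded by dimension
  -- counting; the dead groups `G` are few because their fibres are among the former zeros.
  set Z := {p ∈ P | pairEval r k p v = 0}
  set E := {p ∈ Z \ B | encPoly r (C p.1) v ≠ 0}
  set E₀ := {p ∈ Z \ B | ¬encPoly r (C p.1) v ≠ 0}
  have hZ : #Z = #(Z ∩ B) + #E + #E₀ := by
    rw [add_assoc, card_filter_add_card_filter_not, card_inter_add_card_sdiff]
  have hTE : #(Z ∩ B) + #E ≤ k - 1 + (k - 1) / r * (f.natDegree - r) :=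
    hgen.card_inter_add_card_sdiff_le hf hr hrf hv
  have hGT : #G * f.natDegree ≤ #(Z ∩ B) := by
    rw [← card_filter_fst_mem fun y hy => (card_fiberPairs_group (mem_filter.mp hy).1).trans
      (hfib y (mem_filter.mp hy).1)]
    refine card_le_card fun p hp => mem_inter.mpr ⟨mem_filter.mpr ⟨hgen.subset
      (mem_filter.mp hp).1, ?_⟩, (mem_filter.mp hp).1⟩
    rw [pairEval_apply, (mem_filter.mp (mem_filter.mp hp).2).2, eval_zero]
  have hE₀ : #E₀ ≤ #G * (D - f.natDegree) := by
    rw [← card_filter_fst_mem fun y hy =>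
      card_group_sdiff_fiberPairs hfib hgen.subset hPD (mem_filter.mp hy).1]
    refine card_le_card fun p hp => ?_
    obtain ⟨hpZ, hpB⟩ := mem_sdiff.mp (mem_filter.mp hp).1
    have hpP := (mem_filter.mp hpZ).1
    exact mem_filter.mpr ⟨mem_sdiff.mpr ⟨hpP, hpB⟩,
      mem_filter.mpr ⟨hPY p hpP, not_not.mp (mem_filter.mp hp).2⟩⟩
  have hk : (k - 1) / r * r + (k - 1) % r = k - 1 := by rw [mul_comm]; exact Nat.div_add_mod _ _
  have hmod := Nat.mod_lt (k - 1) hr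
  generalize (k - 1) / r = μ at *
  generalize (k - 1) % r = m at *
  have hμd : μ * f.natDegree = μ * r + μ * (f.natDegree - r) := by
    rw [← mul_add, Nat.add_sub_cancel' hrf]
  have hG : #G ≤ μ := by
    have : #G * f.natDegree < (μ + 1) * f.natDegree := by rw [add_one_mul]; omega
    exact Nat.lt_succ_iff.mp (Nat.lt_of_mul_lt_mul_right this)
  have hμD : μ * (f.natDegree - r) + μ * (D - f.natDegree) = μ * (D - r) := by
    rw [← mul_add]; congr 1; omega
  have := Nat.mul_le_mul_right (D - f.natDegree) hG
  omega

end Distance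

section Weights

variable {F : Type*} [Field F] [DecidableEq F] {r k : ℕ} {P : Finset (F × F)}

theorem exists_le_card_pairEval_eq_zero (hr : 0 < r) (hk : 0 < k) {Y : Finset F} {D : ℕ}
    (hPD : ∀ y ∈ Y, #{p ∈ P | p.1 = y} = D) (hrD : r ≤ D) (hkY : (k - 1) / r < #Y) :
    ∃ v : Fin k → F, v ≠ 0 ∧ k - 1 + (k - 1) / r * (D - r) ≤ #{p ∈ P | pairEval r k p v = 0} := by
  have hk' : (k - 1) / r * r + (k - 1) % r = k - 1 := by rw [mul_comm]; exact Nat.div_add_mod _ _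
  have hmod := Nat.mod_lt (k - 1) hr
  generalize (k - 1) / r = μ at *
  generalize (k - 1) % r = m at *
  obtain ⟨Y₁, hY₁, hY₁card⟩ := exists_subset_card_eq (show μ + 1 ≤ #Y by omega)
  obtain ⟨y₀, hy₀⟩ : Y₁.Nonempty := card_pos.mp (by omega)
  set Y₀ := Y₁.erase y₀
  have hY₀ : Y₀ ⊆ Y := (erase_subset _ _).trans hY₁
  have hY₀card : #Y₀ = μ := by rw [card_erase_of_mem hy₀]; omega
  -- `v` vanishes at `r` points of each group of `Y₀`, hence on these whole groups, and at `m`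
  -- points `R` of the group of `y₀`: `k - 1` linear conditions in all.
  have hS (y) (hy : y ∈ Y₀) : ∃ S ⊆ {p ∈ P | p.1 = y}, #S = r :=
    exists_subset_card_eq (by rw [hPD y (hY₀ hy)]; exact hrD)
  choose! S hSP hScard using hS
  obtain ⟨R, hRP, hRcard⟩ := exists_subset_card_eq (show m ≤ #{p ∈ P | p.1 = y₀} by
    rw [hPD y₀ (hY₁ hy₀)]; omega)
  obtain ⟨v, hv, hvT⟩ := exists_ne_zero_forall_eq_zero (pairEval r k) (Y₀.biUnion S ∪ R) <|
    calc #(Y₀.biUnion S ∪ R) ≤ ∑ y ∈ Y₀, #(S y) + #R :=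
          (card_union_le _ _).trans (by gcongr; exact card_biUnion_le)
      _ = μ * r + m := by rw [sum_congr rfl hScard, sum_const, smul_eq_mul, hY₀card, hRcard]
      _ < finrank F (Fin k → F) := by rw [finrank_fin_fun]; omega
  have hdead (y) (hy : y ∈ Y₀) : encPoly r (C y) v = 0 := by
    by_contra h
    have hsub : S y ⊆ {p ∈ P | p.1 = y ∧ pairEval r k p v = 0} := fun p hp => by
      obtain ⟨hpP, rfl⟩ := mem_filter.mp (hSP y hy hp)
      exact mem_filter.mpr ⟨hpP, rfl, hvT p (mem_union_left _ (mem_biUnion.mpr ⟨_, hy, hp⟩))⟩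
    have := (card_le_card hsub).trans (card_group_pairEval_eq_zero_le hr P h)
    have := hScard y hy
    omega
  refine ⟨v, hv, ?_⟩
  have hμD : μ * D = μ * r + μ * (D - r) := by rw [← mul_add, Nat.add_sub_cancel' hrD]
  calc k - 1 + μ * (D - r) = #{p ∈ P | p.1 ∈ Y₀} + #R := by
        rw [card_filter_fst_mem fun y hy => hPD y (hY₀ hy), hY₀card, hRcard]
        omega
    _ = #({p ∈ P | p.1 ∈ Y₀} ∪ R) := by
        refine (card_union_of_disjoint (disjoint_left.mpr fun p hpY hpR => ?_)).symm
        have h := (mem_filter.mp hpY).2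
        rw [(mem_filter.mp (hRP hpR)).2] at h
        exact notMem_erase y₀ Y₁ h
    _ ≤ _ := card_le_card (union_subset (fun p hp => ?_) fun p hp => ?_)
  · obtain ⟨hpP, hpY⟩ := mem_filter.mp hp
    exact mem_filter.mpr ⟨hpP, by rw [pairEval_apply, hdead _ hpY, eval_zero]⟩
  · exact mem_filter.mpr ⟨(mem_filter.mp (hRP hp)).1, hvT p (mem_union_right _ hp)⟩

theorem le_card_group_pairEval_ne_zero (hr : 0 < r) {y : F} {δ : ℕ}
    (hPy : #{p ∈ P | p.1 = y} = r + δ - 1) {w : Fin k → F}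
    (hw : ∃ p ∈ P, p.1 = y ∧ pairEval r k p w ≠ 0) :
    δ ≤ #{p ∈ P | p.1 = y ∧ pairEval r k p w ≠ 0} := by
  obtain ⟨p, -, rfl, hpw⟩ := hw
  have hloc : encPoly r (C p.1) w ≠ 0 := fun h => hpw (by rw [pairEval_apply, h, eval_zero])
  have := card_group_pairEval_eq_zero_le hr P hloc
  have := card_filter_add_card_filter_not (s := {q ∈ P | q.1 = p.1}) (pairEval r k · w = 0)
  simp only [filter_filter, ne_eq] at this ⊢
  omega

end Weights

section Construction

variable {F : Type*} [Field F] [Fintype F] [DecidableEq F] {r k : ℕ}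

theorem exists_cutsPairKernels (hr : 0 < r) (P : Finset (F × F)) (y : F)
    (hq : #P + (r - 1) * ∑ j ∈ range k, (#P).choose j < Fintype.card F) :
    ∃ x, (y, x) ∉ P ∧ CutsPairKernels r k P (y, x) := by
  classical
  set S := {s ∈ P.powerset | #s < k ∧ ¬pairKernel r k s ≤ LinearMap.ker (encPoly r (C y))}
  set bad : Finset (F × F) → Finset F :=
    fun s => {x | pairKernel r k s ≤ LinearMap.ker (pairEval r k (y, x))}
  -- a witness `w ∈ pairKernel r k s` with `encPoly r (C y) w ≠ 0` rules out all but `r - 1` points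
  have hbad (s) (hs : s ∈ S) : #(bad s) ≤ r - 1 := by
    obtain ⟨w, hw, hw0⟩ := SetLike.not_le_iff_exists.mp (mem_filter.mp hs).2.2
    calc #(bad s) ≤ #{x | (encPoly r (C y) w).eval x = 0} := card_le_card fun x hx =>
          mem_filter.mpr ⟨mem_univ _, LinearMap.mem_ker.mp ((mem_filter.mp hx).2 hw)⟩
      _ ≤ r - 1 := (card_filter_eval_eq_zero_le hw0 _).trans (natDegree_encPoly_C_le hr y w)
  have hS : #S ≤ ∑ j ∈ range k, (#P).choose j :=
    calc #S ≤ #((range k).biUnion fun j => P.powersetCard j) := card_le_card fun s hs => by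
          obtain ⟨hsP, hsk, -⟩ := mem_filter.mp hs
          exact mem_biUnion.mpr ⟨#s, mem_range.mpr hsk,
            mem_powersetCard.mpr ⟨mem_powerset.mp hsP, rfl⟩⟩
      _ ≤ ∑ j ∈ range k, #(P.powersetCard j) := card_biUnion_le
      _ = _ := by simp only [card_powersetCard]
  have hcard : #(P.image Prod.snd ∪ S.biUnion bad) < #(univ : Finset F) :=
    calc #(P.image Prod.snd ∪ S.biUnion bad) ≤ #P + #S * (r - 1) :=
          (card_union_le _ _).trans (add_le_add card_image_le (card_biUnion_le_card_mul _ _ _ hbad))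
      _ ≤ #P + (r - 1) * ∑ j ∈ range k, (#P).choose j := by rw [mul_comm]; gcongr
      _ < _ := by rwa [card_univ]
  obtain ⟨x, -, hx⟩ := exists_mem_notMem_of_card_lt_card hcard
  refine ⟨x, fun hxP => hx (mem_union_left _ (mem_image_of_mem Prod.snd hxP)),
    fun s hsP hsk hlive hle => hx (mem_union_right _ ?_)⟩
  exact mem_biUnion.mpr ⟨s, mem_filter.mpr ⟨mem_powerset.mpr hsP, hsk, hlive⟩,
    mem_filter.mpr ⟨mem_univ _, hle⟩⟩

variable {B : Finset (F × F)} {Y : Finset F} {D : ℕ}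

theorem exists_isGenericExtension_card_eq_add (hr : 0 < r) (hBY : ∀ p ∈ B, p.1 ∈ Y)
    (hBD : ∀ y ∈ Y, #{p ∈ B | p.1 = y} ≤ D)
    (hq : #B < #Y * D → #Y * D + (r - 1) * ∑ j ∈ range k, (#Y * D).choose j < Fintype.card F)
    (m : ℕ) (hm : #B + m ≤ #Y * D) :
    ∃ P, IsGenericExtension r k B P ∧ (∀ p ∈ P, p.1 ∈ Y) ∧ #P = #B + m ∧
      ∀ y ∈ Y, #{p ∈ P | p.1 = y} ≤ D := by
  induction m with
  | zero => exact ⟨B, .refl, hBY, rfl, hBD⟩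
  | succ m ih =>
    obtain ⟨P, hP, hPY, hPcard, hPD⟩ := ih (by omega)
    obtain ⟨y, hy, hyD⟩ : ∃ y ∈ Y, #{p ∈ P | p.1 = y} < D := by
      by_contra! h
      have := sum_le_sum h
      rw [sum_const, smul_eq_mul, ← card_eq_sum_card_fiberwise hPY] at this
      omega
    have hPn : #P ≤ #Y * D := by omega
    obtain ⟨x, hxP, hx⟩ := exists_cutsPairKernels (k := k) hr P y <| lt_of_le_of_lt
      (add_le_add hPn (Nat.mul_le_mul_left _ (sum_le_sum fun j _ => Nat.choose_le_choose j hPn)))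
      (hq (by omega))
    refine ⟨insert (y, x) P, hP.extend hxP hx, fun p hp => ?_,
      by rw [card_insert_of_notMem hxP, hPcard, add_assoc], fun y' hy' => ?_⟩
    · rcases mem_insert.mp hp with rfl | hp
      exacts [hy, hPY p hp]
    · rw [filter_insert]
      split_ifs with hyy'
      · obtain rfl : y = y' := hyy'
        rw [card_insert_of_notMem fun h => hxP (mem_filter.mp h).1]
        exact hyD
      · exact hPD y' hy'

theorem exists_isGenericExtension_card_group_eq (hr : 0 < r) (hBY : ∀ p ∈ B, p.1 ∈ Y)
    (hBD : ∀ y ∈ Y, #{p ∈ B | p.1 = y} ≤ D)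
    (hq : #B < #Y * D → #Y * D + (r - 1) * ∑ j ∈ range k, (#Y * D).choose j < Fintype.card F) :
    ∃ P, IsGenericExtension r k B P ∧ (∀ p ∈ P, p.1 ∈ Y) ∧ ∀ y ∈ Y, #{p ∈ P | p.1 = y} = D := by
  have hBn : #B ≤ #Y * D := by
    rw [card_eq_sum_card_fiberwise hBY, ← smul_eq_mul, ← sum_const]
    exact sum_le_sum hBD
  obtain ⟨P, hP, hPY, hPcard, hPD⟩ :=
    exists_isGenericExtension_card_eq_add hr hBY hBD hq (#Y * D - #B) (by omega)
  refine ⟨P, hP, hPY, (sum_eq_sum_iff_of_le hPD).mp ?_⟩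
  rw [← card_eq_sum_card_fiberwise hPY, sum_const, smul_eq_mul]
  omega

end Construction

section Encoder

variable {F : Type*} [Field F] [DecidableEq F] {r k n : ℕ} {P : Finset (F × F)}

noncomputable def pairEncoder (r k : ℕ) (e : Fin n ≃ P) : (Fin k → F) →ₗ[F] Fin n → F :=
  LinearMap.pi fun j => pairEval r k (e j)

theorem hammingNorm_pairEncoder_add_card (e : Fin n ≃ P) (v : Fin k → F) :
    hammingNorm (pairEncoder r k e v) + #{p ∈ P | pairEval r k p v = 0} = n := by
  have h₁ : hammingNorm (pairEncoder r k e v) = #{p ∈ P | ¬pairEval r k p v = 0} := by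
    rw [← card_filter_equiv e]
    rfl
  have h₂ := card_filter_add_card_filter_not (s := P) (pairEval r k · v = 0)
  have h₃ : #P = n := by simpa using (Fintype.card_congr e).symm
  omega

theorem exists_repair_set (hr : 0 < r) {Y : Finset F} {δ : ℕ} (hPY : ∀ p ∈ P, p.1 ∈ Y)
    (hPD : ∀ y ∈ Y, #{p ∈ P | p.1 = y} = r + δ - 1) (e : Fin n ≃ P) (j : Fin n) :
    ∃ S : Finset (Fin n), j ∈ S ∧ #S ≤ r + δ - 1 ∧
      ∀ c ∈ LinearMap.range (pairEncoder r k e), ∀ c' ∈ LinearMap.range (pairEncoder r k e),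
        (∃ i ∈ S, c i ≠ c' i) → δ ≤ #{i ∈ S | c i ≠ c' i} := by
  set y := (e j : F × F).1
  have hy : y ∈ Y := hPY _ (e j).2
  refine ⟨({j' | (e j' : F × F).1 = y} : Finset (Fin n)), by simp [y], ?_, ?_⟩
  · rw [card_filter_equiv e (·.1 = y), hPD y hy]
  rintro _ ⟨v, rfl⟩ _ ⟨v', rfl⟩ ⟨i, hi, hne⟩
  have hsub (j' : Fin n) :
      pairEncoder r k e v j' ≠ pairEncoder r k e v' j' ↔ pairEval r k (e j') (v - v') ≠ 0 := by
    simp [pairEncoder, sub_eq_zero]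
  rw [filter_filter]
  simp only [hsub]
  rw [card_filter_equiv e (fun p => p.1 = y ∧ pairEval r k p (v - v') ≠ 0)]
  exact le_card_group_pairEval_ne_zero hr (hPD y hy)
    ⟨e i, (e i).2, (mem_filter.mp hi).2, (hsub i).mp hne⟩

end Encoder

section LRC

variable {F : Type} [Field F] [Fintype F] [DecidableEq F] {r k n : ℕ} {P : Finset (F × F)}
  {f : F[X]} {Y : Finset F}

theorem card_fiberPairs (hfib : ∀ y ∈ Y, #{x | f.eval x = y} = f.natDegree) :
    #(fiberPairs f Y) = #Y * f.natDegree := by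
  rw [← card_filter_fst_mem fun y hy => (card_fiberPairs_group hy).trans (hfib y hy),
    filter_true_of_mem fun p hp => (mem_fiberPairs.mp hp).1]

theorem isLinearLRC_of_isGenericExtension {δ : ℕ} (hf : f.Monic) (hr : 0 < r)
    (hrf : r ≤ f.natDegree) (hfD : f.natDegree ≤ r + δ - 1)
    (hfib : ∀ y ∈ Y, #{x | f.eval x = y} = f.natDegree)
    (hgen : IsGenericExtension r k (fiberPairs f Y) P) (hPY : ∀ p ∈ P, p.1 ∈ Y)
    (hPD : ∀ y ∈ Y, #{p ∈ P | p.1 = y} = r + δ - 1) (hk : 0 < k) (hkY : (k - 1) / r < #Y)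
    (hn : n = #Y * (r + δ - 1)) :
    IsLinearLRC F n k (n - (k - 1 + (k - 1) / r * (δ - 1))) r δ := by
  have hDr : r + δ - 1 - r = δ - 1 := by omega
  let e : Fin n ≃ P := (P.equivFin.trans
    (finCongr (by rw [hn, ← card_filter_fst_mem hPD, filter_true_of_mem hPY]))).symm
  have hzeros {v : Fin k → F} (hv : v ≠ 0) :
      #{p ∈ P | pairEval r k p v = 0} ≤ k - 1 + (k - 1) / r * (δ - 1) := by
    simpa only [hDr] using card_pairEval_eq_zero_le hf hr hrf hfib hgen hPY hPD hfD hv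
  have hdist {v : Fin k → F} (hv : v ≠ 0) :
      n - (k - 1 + (k - 1) / r * (δ - 1)) ≤ hammingNorm (pairEncoder r k e v) := by
    have := hammingNorm_pairEncoder_add_card (r := r) e v
    have := hzeros hv
    omega
  have hlt : k - 1 + (k - 1) / r * (δ - 1) < n := by
    have hk' : (k - 1) / r * r + (k - 1) % r = k - 1 := by
      rw [mul_comm]; exact Nat.div_add_mod _ _
    have := Nat.mod_lt (k - 1) hr
    have : ((k - 1) / r + 1) * (r + δ - 1) ≤ #Y * (r + δ - 1) := Nat.mul_le_mul_right _ hkY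
    have : (k - 1) / r * (r + δ - 1) = (k - 1) / r * r + (k - 1) / r * (δ - 1) := by
      rw [← mul_add]; congr 1; omega
    rw [add_one_mul] at *
    omega
  have hinj : Function.Injective (pairEncoder r k e) := by
    rw [← LinearMap.ker_eq_bot, LinearMap.ker_eq_bot']
    intro v hv
    by_contra hv0
    have := hdist hv0
    rw [hv, hammingNorm_zero] at this
    omega
  refine ⟨LinearMap.range (pairEncoder r k e), ?_, ?_, ?_, exists_repair_set hr hPY hPD e⟩
  · rw [LinearMap.finrank_range_of_inj hinj, finrank_fin_fun]
  · rintro _ ⟨v, rfl⟩ hv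
    exact hdist fun h => hv (by rw [h, map_zero])
  · obtain ⟨v, hv, hge⟩ := exists_le_card_pairEval_eq_zero hr hk hPD (hrf.trans hfD) hkY
    refine ⟨pairEncoder r k e v, ⟨v, rfl⟩, fun h => hv (hinj (h.trans (map_zero _).symm)), ?_⟩
    have := hammingNorm_pairEncoder_add_card (r := r) e v
    have := hzeros hv
    rw [hDr] at hge
    omega

end LRC

theorem two_mul_pow_le_pow {r δ d : ℕ} (hδ : 2 ≤ δ) (hd : d < 3 * r) :
    (2 * r) ^ (2 * d) ≤ (r * δ) ^ (r * 4 ^ r) := by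
  have h4 : 3 * r + 1 ≤ 4 ^ r := by
    have := one_add_le_pow_of_two_add_nonneg (a := (3 : ℕ)) (by norm_num) r
    norm_num at this
    omega
  have h4r := Nat.mul_le_mul_left r h4
  have hr : 1 ≤ r := by omega
  calc (2 * r) ^ (2 * d) ≤ (2 * r) ^ (r * 4 ^ r) := Nat.pow_le_pow_right (by omega) (by nlinarith)
    _ ≤ (r * δ) ^ (r * 4 ^ r) := Nat.pow_le_pow_left (by nlinarith) _

theorem mul_pow_le_choose_of_lt {r δ d a q : ℕ} (hδ : 2 ≤ δ) (hd1 : 1 ≤ d) (hd : d < 3 * r)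
    (ha : 1 ≤ a) (hq : (r * δ) ^ (r * 4 ^ r) * (2 * a) < q) : a * q ^ (d - 1) ≤ q.choose d := by
  have hpow := two_mul_pow_le_pow hδ hd
  have h2r : d ≤ (2 * r) ^ d := Nat.lt_two_pow_self.le.trans (Nat.pow_le_pow_left (by omega) d)
  have hsq : d * d ≤ (r * δ) ^ (r * 4 ^ r) :=
    calc d * d ≤ (2 * r) ^ d * (2 * r) ^ d := Nat.mul_le_mul h2r h2r
      _ = (2 * r) ^ (2 * d) := by ring
      _ ≤ _ := hpow
  have hfac : d ! ≤ (r * δ) ^ (r * 4 ^ r) :=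
    calc d ! ≤ d ^ d := Nat.factorial_le_pow d
      _ ≤ ((2 * r) ^ 2) ^ d := Nat.pow_le_pow_left (by nlinarith) d
      _ = (2 * r) ^ (2 * d) := by rw [← pow_mul]
      _ ≤ _ := hpow
  exact Nat.mul_pow_le_choose hd1 (by nlinarith) (by nlinarith)

theorem exists_fiber_degree {r δ a k n q : ℕ} (hδ : 2 ≤ δ) (hr : 1 ≤ r)
    (hn : n = a * (r + δ - 1)) (hrk : r < k) (hkn : k ≤ a * r)
    (hq : (r * δ) ^ (r * 4 ^ r) * (n + (r * δ) ^ ((r - 1) * 4 ^ r)).choose (k - 1) < q) :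
    ∃ d, r ≤ d ∧ d ≤ r + δ - 1 ∧ a * q ^ (d - 1) ≤ q.choose d ∧
      (d < r + δ - 1 → n + (r - 1) * ∑ j ∈ range k, n.choose j < q) := by
  have hna : n = a * r + a * (δ - 1) := by rw [hn, ← mul_add]; congr 1; omega
  have ha : 1 ≤ a := Nat.pos_of_ne_zero (by rintro rfl; omega)
  have haδ : a ≤ a * (δ - 1) := Nat.le_mul_of_pos_right a (by omega)
  have har : a ≤ a * r := Nat.le_mul_of_pos_right a hr
  have hnN : n ≤ (n + (r * δ) ^ ((r - 1) * 4 ^ r)).choose (k - 1) :=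
    (Nat.self_le_choose (by omega) (by omega)).trans' (Nat.le_add_right _ _)
  have hCN : n.choose (k - 1) ≤ (n + (r * δ) ^ ((r - 1) * 4 ^ r)).choose (k - 1) :=
    Nat.choose_le_choose _ (Nat.le_add_right _ _)
  generalize (n + (r * δ) ^ ((r - 1) * 4 ^ r)).choose (k - 1) = N at hq hnN hCN
  have hMa : (r * δ) ^ (r * 4 ^ r) * (2 * a) < q :=
    lt_of_le_of_lt (Nat.mul_le_mul_left _ (by omega)) hq
  by_cases h3k : 3 * k ≤ n
  · refine ⟨r + 1, by omega, by omega, mul_pow_le_choose_of_lt hδ (by omega) (by omega)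
      (by omega) hMa, fun _ => ?_⟩
    have hsum := Nat.sum_range_choose_le_two_mul (n := n) (t := k - 1) (by omega)
    rw [Nat.sub_add_cancel (by omega : 1 ≤ k)] at hsum
    have hn1 : n ≤ ∑ j ∈ range k, n.choose j := by
      simpa using single_le_sum (f := fun j => n.choose j) (fun _ _ => Nat.zero_le _)
        (mem_range.mpr (by omega : 1 < k))
    have h2r : 2 * r ≤ (r * δ) ^ (r * 4 ^ r) :=
      (Nat.le_self_pow (by norm_num) _).trans (two_mul_pow_le_pow (d := 1) hδ (by omega))
    calc n + (r - 1) * ∑ j ∈ range k, n.choose j ≤ r * ∑ j ∈ range k, n.choose j := by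
          obtain ⟨r, rfl⟩ : ∃ r', r = r' + 1 := ⟨r - 1, by omega⟩
          simp only [Nat.add_sub_cancel, add_mul, one_mul]
          omega
      _ ≤ r * (2 * n.choose (k - 1)) := Nat.mul_le_mul_left _ hsum
      _ = 2 * r * n.choose (k - 1) := by ring
      _ ≤ (r * δ) ^ (r * 4 ^ r) * N := Nat.mul_le_mul h2r hCN
      _ < q := hq
  · refine ⟨r + δ - 1, by omega, le_rfl, mul_pow_le_choose_of_lt hδ (by omega) ?_ (by omega) hMa,
      fun h => absurd h (lt_irrefl _)⟩
    have : a * (r + δ - 1) < a * (3 * r) := by nlinarith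
    exact Nat.lt_of_mul_lt_mul_left this

theorem natCast_sub_eq_doptZ {n k r δ : ℕ} (hr : 0 < r) (hk : 0 < k) (hδ : 0 < δ)
    (h : k - 1 + (k - 1) / r * (δ - 1) ≤ n) :
    ((n - (k - 1 + (k - 1) / r * (δ - 1)) : ℕ) : ℤ) = doptZ n k r δ := by
  have hceil : (k + r - 1) / r = (k - 1) / r + 1 := by
    rw [show k + r - 1 = k - 1 + r by omega, Nat.add_div_right _ hr]
  unfold doptZ
  rw [hceil, Nat.cast_sub h]
  push_cast [Nat.cast_sub (by omega : 1 ≤ k), Nat.cast_sub (by omega : 1 ≤ δ)]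
  ring

theorem stmt_7 (F : Type) [Field F] [Fintype F] [DecidableEq F]
    (n k r δ a : ℕ) (hδ : 2 ≤ δ) (hr : 1 ≤ r) (ha : 1 ≤ a)
    (hn : n = a * (r + δ - 1))
    (hrk : r < k) (hkn : k ≤ n - a * (δ - 1))
    (hq : (r * δ) ^ (r * 4 ^ r) *
        Nat.choose (n + (r * δ) ^ ((r - 1) * 4 ^ r)) (k - 1) < Fintype.card F) :
    ∃ d : ℕ, IsLinearLRC F n k d r δ ∧ (d : ℤ) = doptZ n k r δ := by
  have hna : n = a * r + a * (δ - 1) := by rw [hn, ← mul_add]; congr 1; omega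
  have hkar : k ≤ a * r := by omega
  have hμa : (k - 1) / r < a := Nat.div_lt_of_lt_mul (by rw [mul_comm]; omega)
  obtain ⟨d, hrd, hdD, hpig, hext⟩ := exists_fiber_degree hδ hr hn hrk hkar hq
  obtain ⟨f, hf, rfl, Y, rfl, hfib⟩ := exists_monic_card_fiber_eq ha hpig
  obtain ⟨P, hgen, hPY, hPD⟩ := exists_isGenericExtension_card_group_eq (k := k)
    (B := fiberPairs f Y) (D := r + δ - 1) hr (fun p hp => (mem_fiberPairs.mp hp).1)
    (fun y hy => by rw [card_fiberPairs_group hy, hfib y hy]; exact hdD)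
    (fun h => by
      rw [card_fiberPairs hfib] at h
      rw [← hn]
      exact hext (Nat.lt_of_mul_lt_mul_left h))
  refine ⟨_, isLinearLRC_of_isGenericExtension hf hr hrd hdD hfib hgen hPY hPD (by omega) hμa hn,
    natCast_sub_eq_doptZ hr (by omega) (by omega) ?_⟩
  have := Nat.mul_le_mul_right (δ - 1) hμa.le
  omega
end

section
/- Let δ ≥ 2, r ≥ 1, and let n, k be integers with r < k ≤ n − ⌈n/(r+δ−1)⌉·(δ−1). Then for every sufficiently large prime power q there exists a linear code over F_q of length n, dimension k, with all-symbol (r,δ)-locality and minimum Hamming distance d ≥ d_opt(n,k,r,δ) − δ + 1, where d_opt(n,k,r,δ) = n − k − (⌈k/r⌉ − 1)(δ−1) + 1; i.e., an almost optimal linear LRC exists. -/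
open Polynomial Finset Module Function

section Avoidance

variable {F V : Type*} [Field F] [AddCommGroup V] [Module F V] [FiniteDimensional F V]

/- A proper subspace has index `|F| ^ codim ≥ |F|`, while a covering by `N` cosets must contain
one of index at most `N`. -/
theorem Submodule.exists_forall_notMem_of_card_lt (s : Finset (Submodule F V))
    (hs : ∀ U ∈ s, U ≠ ⊤) (hcard : #s < Nat.card F) : ∃ v : V, ∀ U ∈ s, v ∉ U := by
  by_contra! hcover
  obtain ⟨U, hU, -, hindex⟩ := AddSubgroup.exists_index_le_card_of_leftCoset_cover
    (g := fun _ => (0 : V)) (H := Submodule.toAddSubgroup) (s := s) (by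
      refine Set.eq_univ_of_forall fun v => ?_
      obtain ⟨U, hU, hv⟩ := hcover v
      exact Set.mem_biUnion hU (by simpa using hv))
  have : Nontrivial (V ⧸ U) := Submodule.Quotient.nontrivial_iff.mpr (hs U hU)
  have hindex_eq : U.toAddSubgroup.index = Nat.card F ^ finrank F (V ⧸ U) :=
    Module.natCard_eq_pow_finrank (K := F) (V := V ⧸ U)
  have := Nat.le_self_pow (finrank_pos (R := F) (M := V ⧸ U)).ne' (Nat.card F)
  omega

theorem Submodule.exists_finrank_eq_forall_inf_eq_bot (s : Finset (Submodule F V)) (k : ℕ)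
    (hk : k ≤ finrank F V) (hs : ∀ U ∈ s, finrank F U + k ≤ finrank F V)
    (hcard : #s + 1 < Nat.card F) :
    ∃ W : Submodule F V, finrank F W = k ∧ ∀ U ∈ s, W ⊓ U = ⊥ := by
  induction k with
  | zero => exact ⟨⊥, finrank_bot F V, fun U _ => bot_inf_eq U⟩
  | succ k ih =>
    obtain ⟨W, hWk, hW⟩ := ih (by omega) fun U hU => by have := hs U hU; omega
    have hproper : ∀ U ∈ insert W (s.image (W ⊔ ·)), U ≠ ⊤ := by
      intro U hU hUtop
      have htop := finrank_top F V
      rcases mem_insert.1 hU with rfl | hU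
      · rw [hUtop] at hWk; omega
      · obtain ⟨U', hU', rfl⟩ := mem_image.1 hU
        have := Submodule.finrank_add_le_finrank_add_finrank W U'
        have := hs U' hU'
        rw [hUtop] at *; omega
    have hcard' : #(insert W (s.image (W ⊔ ·))) < Nat.card F :=
      (card_insert_le _ _).trans_lt (by have := card_image_le (s := s) (f := (W ⊔ ·)); omega)
    obtain ⟨v, hv⟩ := Submodule.exists_forall_notMem_of_card_lt _ hproper hcard'
    have hvW : v ∉ W := hv W (mem_insert_self _ _)
    refine ⟨W ⊔ F ∙ v, by rw [Submodule.finrank_sup_span_singleton hvW, hWk],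
      fun U hU => ?_⟩
    rw [Submodule.eq_bot_iff]
    rintro _ ⟨hy, hyU⟩
    obtain ⟨w, hw, _, hz, rfl⟩ := Submodule.mem_sup.1 hy
    obtain ⟨a, rfl⟩ := Submodule.mem_span_singleton.1 hz
    rcases eq_or_ne a 0 with rfl | ha
    · rw [zero_smul, add_zero] at hyU ⊢
      simpa [hW U hU] using Submodule.mem_inf.2 ⟨hw, hyU⟩
    · refine absurd ?_ (hv _ (mem_insert_of_mem (mem_image_of_mem _ hU)))
      have : a • v ∈ W ⊔ U := by
        simpa using Submodule.sub_mem _ (Submodule.mem_sup_right hyU) (Submodule.mem_sup_left hw)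
      simpa [smul_smul, ha] using Submodule.smul_mem _ a⁻¹ this

end Avoidance

theorem Polynomial.eq_zero_of_mem_degreeLT_of_eval_eq_zero {R ι : Type*} [CommRing R]
    [IsDomain R] {p : R[X]} {d : ℕ} (hp : p ∈ degreeLT R d) {pos : ι → R} {s : Finset ι}
    (hpos : Set.InjOn pos s) (hs : d ≤ #s) (h : ∀ j ∈ s, p.eval (pos j) = 0) : p = 0 := by
  classical
  refine eq_zero_of_degree_lt_of_eval_finset_eq_zero (s.image pos) ?_ (by simpa using h)
  rw [card_image_of_injOn hpos]
  exact (mem_degreeLT.1 hp).trans_le (by exact_mod_cast hs)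

theorem Polynomial.finrank_degreeLT (R : Type*) [Ring R] [StrongRankCondition R] (n : ℕ) :
    finrank R (degreeLT R n) = n := by
  rw [(degreeLTEquiv R n).finrank_eq, finrank_fin_fun]

def vanishingOn {R M ι : Type*} [Semiring R] [AddCommMonoid M] [Module R M]
    (E : M →ₗ[R] ι → R) (P : Finset ι) : Submodule R M :=
  (Submodule.pi P fun _ => ⊥).comap E

theorem mem_vanishingOn {R M ι : Type*} [Semiring R] [AddCommMonoid M] [Module R M]
    {E : M →ₗ[R] ι → R} {P : Finset ι} {w : M} :
    w ∈ vanishingOn E P ↔ ∀ j ∈ P, E w j = 0 := by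
  simp [vanishingOn]

theorem lt_hammingNorm_add_of_forall_inf_vanishingOn_eq_bot {R M ι : Type*} [Semiring R]
    [DecidableEq R] [AddCommMonoid M] [Module R M] [Fintype ι] (E : M →ₗ[R] ι → R)
    (W : Submodule R M) (B : ℕ) (hW : ∀ P : Finset ι, #P = B → W ⊓ vanishingOn E P = ⊥)
    {w : M} (hw : w ∈ W) (hEw : E w ≠ 0) : Fintype.card ι < hammingNorm (E w) + B := by
  by_contra! hle
  have hzeros : B ≤ #{j | E w j = 0} := by
    have := card_filter_add_card_filter_not (s := univ) fun j => E w j = 0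
    rw [card_univ] at this
    have : hammingNorm (E w) = #{j | ¬E w j = 0} := rfl
    omega
  obtain ⟨P, hPzero, hPcard⟩ := exists_subset_card_eq hzeros
  have : w ∈ W ⊓ vanishingOn E P :=
    ⟨hw, mem_vanishingOn.2 fun j hj => (mem_filter.1 (hPzero hj)).2⟩
  rw [hW P hPcard, Submodule.mem_bot] at this
  exact hEw (by rw [this, map_zero])

/- Zeros at `p i` points of a group of dimension `κ i` impose `min (p i) (κ i)` conditions, so
each group wastes at most `e` zeros. If more than `t` groups waste some, at least `t` of them are
full groups (`r ≤ κ i`) and already impose `t * r ≥ k` conditions. -/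
theorem le_sum_min_of_le_add {γ : Type*} {s : Finset γ} {p κ : γ → ℕ} {k t r e : ℕ}
    (i₀ : γ) (hp : ∀ i ∈ s, p i ≤ κ i + e) (hκ : ∀ i ∈ s, i ≠ i₀ → r ≤ κ i)
    (hsum : k + t * e ≤ ∑ i ∈ s, p i) (hkt : k ≤ t * r) :
    k ≤ ∑ i ∈ s, min (p i) (κ i) := by
  classical
  set O := s.filter fun i => κ i < p i
  have hexcess : ∑ i ∈ s, p i ≤ ∑ i ∈ s, min (p i) (κ i) + #O * e := by
    calc ∑ i ∈ s, p i ≤ ∑ i ∈ s, (min (p i) (κ i) + if κ i < p i then e else 0) :=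
          sum_le_sum fun i hi => by have := hp i hi; split_ifs <;> omega
      _ = ∑ i ∈ s, min (p i) (κ i) + #O * e := by
          rw [sum_add_distrib, ← sum_filter, sum_const, smul_eq_mul]
  rcases le_or_gt #O t with hO | hO
  · have := Nat.mul_le_mul_right e hO
    omega
  · have hfull : ∀ i ∈ O.erase i₀, r ≤ min (p i) (κ i) := fun i hi => by
      obtain ⟨hi₀, hi⟩ := mem_erase.1 hi
      obtain ⟨hi, hlt⟩ := mem_filter.1 hi
      have := hκ i hi hi₀
      omega
    calc k ≤ t * r := hkt
      _ ≤ #(O.erase i₀) * r := Nat.mul_le_mul_right r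
          (by have := pred_card_le_card_erase (s := O) (a := i₀); omega)
      _ ≤ ∑ i ∈ O.erase i₀, min (p i) (κ i) := by
          rw [← smul_eq_mul, ← sum_const]; exact sum_le_sum hfull
      _ ≤ ∑ i ∈ s, min (p i) (κ i) :=
          sum_le_sum_of_subset ((erase_subset _ _).trans (filter_subset _ _))

section GroupedEvaluation

variable {F ι γ : Type*} [Field F] (grp : ι → γ) (pos : ι → F) (κ : γ → ℕ)

/- The message of group `i` is a polynomial of degree `< κ i`, and coordinate `j` reads the
polynomial of its group at the point `pos j`: for injective `pos` this is a direct sum of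
Reed–Solomon codes, one for each group. -/
noncomputable def groupedEval : (∀ i, degreeLT F (κ i)) →ₗ[F] ι → F :=
  LinearMap.pi fun j =>
    (leval (pos j)).comp ((degreeLT F (κ (grp j))).subtype.comp (LinearMap.proj (grp j)))

theorem groupedEval_apply (f : ∀ i, degreeLT F (κ i)) (j : ι) :
    groupedEval grp pos κ f j = (f (grp j) : F[X]).eval (pos j) :=
  rfl

variable {grp pos κ} [DecidableEq γ]

theorem groupedEval_injective [Fintype ι] (hpos : Injective pos)
    (hκ : ∀ i, κ i ≤ #{j | grp j = i}) :
    Injective (groupedEval grp pos κ) := by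
  rw [injective_iff_map_eq_zero]
  intro f hf
  funext i
  refine Subtype.ext (eq_zero_of_mem_degreeLT_of_eval_eq_zero (f i).2 hpos.injOn (hκ i) ?_)
  intro j hj
  obtain rfl := (mem_filter.1 hj).2
  exact congrFun hf j

theorem le_card_filter_groupedEval_ne [Fintype ι] [DecidableEq F] (hpos : Injective pos)
    {e : ℕ} {i : γ} (hκ : κ i ≤ #{j | grp j = i} - e) (f f' : ∀ i, degreeLT F (κ i))
    (hne : ∃ j ∈ ({j | grp j = i} : Finset ι),
      groupedEval grp pos κ f j ≠ groupedEval grp pos κ f' j) :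
    e + 1 ≤ #(({j | grp j = i} : Finset ι).filter
      fun j => groupedEval grp pos κ f j ≠ groupedEval grp pos κ f' j) := by
  by_contra! hfew
  set S : Finset ι := {j | grp j = i}
  have hagree :
      κ i ≤ #(S.filter fun j => groupedEval grp pos κ f j = groupedEval grp pos κ f' j) := by
    have := card_filter_add_card_filter_not (s := S)
      fun j => groupedEval grp pos κ f j ≠ groupedEval grp pos κ f' j
    simp only [not_not] at this
    omega
  have hfi : f i = f' i := by
    refine Subtype.ext (sub_eq_zero.1 (eq_zero_of_mem_degreeLT_of_eval_eq_zero
      (sub_mem (f i).2 (f' i).2) hpos.injOn hagree fun j hj => ?_))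
    obtain ⟨hj, heq⟩ := mem_filter.1 hj
    obtain rfl := (mem_filter.1 hj).2
    rw [eval_sub, sub_eq_zero]
    exact heq
  obtain ⟨j, hj, hne⟩ := hne
  obtain rfl := (mem_filter.1 hj).2
  exact hne (by rw [groupedEval_apply, groupedEval_apply, hfi])

theorem finrank_vanishingOn_groupedEval_le [Fintype γ] (hpos : Injective pos) (P : Finset ι) :
    finrank F (vanishingOn (groupedEval grp pos κ) P)
      ≤ ∑ i, (κ i - min #{j ∈ P | grp j = i} (κ i)) := by
  set q := fun i => min #{j ∈ P | grp j = i} (κ i)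
  -- A message vanishing on `P` is determined by its coefficients of degree `≥ q i`: the rest of
  -- `f i` has degree `< q i` and vanishes at `q i` distinct points.
  let highCoeffs : (∀ i, degreeLT F (κ i)) →ₗ[F] ∀ i, Fin (κ i - q i) → F :=
    LinearMap.pi fun i => LinearMap.pi fun b =>
      (lcoeff F (q i + b)).comp ((degreeLT F (κ i)).subtype.comp (LinearMap.proj i))
  have hinj : Injective (highCoeffs.comp (vanishingOn (groupedEval grp pos κ) P).subtype) := by
    rw [injective_iff_map_eq_zero]
    rintro ⟨f, hf⟩ hhigh
    refine Subtype.ext (funext fun i => Subtype.ext ?_)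
    have hlow : (f i : F[X]) ∈ degreeLT F (q i) := by
      refine mem_degreeLT.2 ((degree_lt_iff_coeff_zero _ _).2 fun m hm => ?_)
      rcases lt_or_ge m (κ i) with hmκ | hmκ
      · have := congrFun (congrFun hhigh i) ⟨m - q i, by omega⟩
        simpa [highCoeffs, Nat.add_sub_cancel' hm] using this
      · exact (degree_lt_iff_coeff_zero _ _).1 (mem_degreeLT.1 (f i).2) m hmκ
    refine eq_zero_of_mem_degreeLT_of_eval_eq_zero hlow hpos.injOn (min_le_left _ _) ?_
    intro j hj
    obtain ⟨hjP, rfl⟩ := mem_filter.1 hj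
    exact mem_vanishingOn.1 hf j hjP
  calc finrank F (vanishingOn (groupedEval grp pos κ) P)
      ≤ finrank F (∀ i, Fin (κ i - q i) → F) :=
        LinearMap.finrank_le_finrank_of_injective hinj
    _ = ∑ i, (κ i - q i) := by simp [finrank_pi_fintype]

theorem finrank_vanishingOn_groupedEval_add_le [Fintype ι] [Fintype γ] (hpos : Injective pos)
    {r e k t : ℕ} (i₀ : γ) (hκ : ∀ i, #{j | grp j = i} ≤ κ i + e)
    (hfull : ∀ i ≠ i₀, r ≤ κ i) (hkt : k ≤ t * r) {P : Finset ι}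
    (hP : k + t * e ≤ #P) :
    finrank F (vanishingOn (groupedEval grp pos κ) P) + k ≤ ∑ i, κ i := by
  have hmin : k ≤ ∑ i, min #{j ∈ P | grp j = i} (κ i) := by
    refine le_sum_min_of_le_add (e := e) i₀ (fun i _ => ?_) (fun i _ => hfull i) ?_ hkt
    · exact (card_le_card (filter_subset_filter _ (subset_univ P))).trans (hκ i)
    · rwa [← card_eq_sum_card_fiberwise (by simp)]
  have := finrank_vanishingOn_groupedEval_le (grp := grp) (κ := κ) hpos P
  rw [sum_tsub_distrib _ fun i _ => min_le_right _ _] at this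
  have := sum_le_sum fun i (_ : i ∈ univ) => min_le_right #{j ∈ P | grp j = i} (κ i)
  omega

end GroupedEvaluation

theorem le_sum_card_filter_tsub {ι γ : Type*} [Fintype ι] [Fintype γ] [DecidableEq γ]
    (grp : ι → γ) {k e : ℕ} (h : k + Fintype.card γ * e ≤ Fintype.card ι) :
    k ≤ ∑ i, (#{j | grp j = i} - e) := by
  have hcard := card_eq_sum_card_fiberwise (f := grp) (s := univ) (t := univ) (by simp)
  have : ∑ i, #{j | grp j = i} ≤ ∑ i, ((#{j | grp j = i} - e) + e) :=
    sum_le_sum fun i _ => le_tsub_add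
  rw [sum_add_distrib, sum_const, card_univ, smul_eq_mul] at this
  rw [card_univ] at hcard
  omega

theorem exists_lrc_of_partition {F ι γ : Type*} [Field F] [Fintype F] [DecidableEq F]
    [Fintype ι] [Fintype γ] [DecidableEq γ] (grp : ι → γ) (pos : ι → F)
    (hpos : Injective pos) {r e k t : ℕ} (i₀ : γ) (hsize : ∀ i, #{j | grp j = i} ≤ r + e)
    (hfull : ∀ i ≠ i₀, r + e ≤ #{j | grp j = i})
    (hk : k + Fintype.card γ * e ≤ Fintype.card ι) (hkt : k ≤ t * r)
    (hF : (Fintype.card ι).choose (k + t * e) + 1 < Fintype.card F) :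
    ∃ C : Submodule F (ι → F), finrank F C = k ∧
      (∀ c ∈ C, c ≠ 0 → Fintype.card ι < hammingNorm c + (k + t * e)) ∧
      ∀ j, ∃ S : Finset ι, j ∈ S ∧ #S ≤ r + e ∧
        ∀ c ∈ C, ∀ c' ∈ C, (∃ i ∈ S, c i ≠ c' i) →
          e + 1 ≤ #(S.filter fun i => c i ≠ c' i) := by
  classical
  set E := groupedEval grp pos fun i => #{j | grp j = i} - e
  have hfinrank :
      finrank F (∀ i, degreeLT F (#{j | grp j = i} - e)) = ∑ i, (#{j | grp j = i} - e) := by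
    simp [finrank_pi_fintype, finrank_degreeLT]
  obtain ⟨W, hWk, hW⟩ := Submodule.exists_finrank_eq_forall_inf_eq_bot
    ((powersetCard (k + t * e) univ).image (vanishingOn E)) k
    (hfinrank ▸ le_sum_card_filter_tsub grp hk)
    (by
      simpa [hfinrank] using fun P hP => finrank_vanishingOn_groupedEval_add_le hpos i₀
        (fun i => le_tsub_add) (fun i hi => le_tsub_of_add_le_right (hfull i hi)) hkt hP.ge)
    (by
      have := card_image_le (s := powersetCard (k + t * e) (univ : Finset ι)) (f := vanishingOn E)
      rw [card_powersetCard, card_univ] at this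
      rw [Nat.card_eq_fintype_card]
      omega)
  refine ⟨W.map E, ?_, ?_, fun j =>
    ⟨({j' | grp j' = grp j} : Finset ι), by simp, hsize _, ?_⟩⟩
  · rw [← (Submodule.equivMapOfInjective E
      (groupedEval_injective hpos fun i => Nat.sub_le _ _) W).finrank_eq, hWk]
  · rintro _ ⟨w, hw, rfl⟩ hc
    exact lt_hammingNorm_add_of_forall_inf_vanishingOn_eq_bot E W _
      (fun P hP => hW _ (mem_image_of_mem _ (mem_powersetCard_univ.2 hP))) hw hc
  · rintro _ ⟨f, -, rfl⟩ _ ⟨f', -, rfl⟩ hne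
    exact le_card_filter_groupedEval_ne (κ := fun i => #{j | grp j = i} - e) hpos le_rfl
      f f' hne

theorem Fin.card_filter_div_eq_le (n g i : ℕ) (hg : 0 < g) :
    #{j : Fin n | (j : ℕ) / g = i} ≤ g := by
  refine (card_le_card_of_injOn (fun j : Fin n => (j : ℕ) % g) (t := range g)
    (fun j _ => by simpa using Nat.mod_lt _ hg) ?_).trans_eq (card_range g)
  intro j₁ hj₁ j₂ hj₂ hmod
  simp only [coe_filter, mem_univ, true_and, Set.mem_ofPred_eq] at hj₁ hj₂ hmod
  have h₁ := Nat.div_add_mod (j₁ : ℕ) g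
  have h₂ := Nat.div_add_mod (j₂ : ℕ) g
  rw [hj₁] at h₁
  rw [hj₂] at h₂
  exact Fin.ext (by omega)

theorem Fin.le_card_filter_div_eq {n g i : ℕ} (hg : 0 < g) (hi : (i + 1) * g ≤ n) :
    g ≤ #{j : Fin n | (j : ℕ) / g = i} := by
  have hlt : ∀ c : Fin g, i * g + c < n := fun c => by rw [Nat.succ_mul] at hi; omega
  refine (card_fin g).symm.trans_le (card_le_card_of_injOn (s := univ)
    (fun c : Fin g => (⟨i * g + c, hlt c⟩ : Fin n)) (fun c _ => ?_) fun c₁ _ c₂ _ h => ?_)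
  · simp only [coe_filter, mem_univ, true_and, Set.mem_ofPred_eq]
    rw [mul_comm, Nat.mul_add_div hg, Nat.div_eq_of_lt c.2, add_zero]
  · exact Fin.ext (by simpa using h)

theorem Fin.exists_partition_ceilDiv (n g : ℕ) (hg : 0 < g) (hn : 0 < n) :
    ∃ (grp : Fin n → Fin ((n + g - 1) / g)) (i₀ : Fin ((n + g - 1) / g)),
      (∀ i, #{j | grp j = i} ≤ g) ∧ ∀ i ≠ i₀, g ≤ #{j | grp j = i} := by
  have hnm : n ≤ (n + g - 1) / g * g := by
    have := Nat.lt_div_mul_add (a := n + g - 1) hg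
    omega
  have hmn : (n + g - 1) / g * g ≤ n + g - 1 := Nat.div_mul_le_self _ _
  set m := (n + g - 1) / g
  have hm : 0 < m := Nat.pos_of_ne_zero fun h => by simp [h] at hnm; omega
  let grp : Fin n → Fin m := fun j => ⟨j / g, (Nat.div_lt_iff_lt_mul hg).2 (j.2.trans_le hnm)⟩
  have hfiber : ∀ i, #{j | grp j = i} = #{j : Fin n | (j : ℕ) / g = i} := fun i => by
    simp [grp, Fin.ext_iff]
  refine ⟨grp, ⟨m - 1, by omega⟩, fun i => hfiber i ▸ Fin.card_filter_div_eq_le n g i hg,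
    fun i hi => hfiber i ▸ Fin.le_card_filter_div_eq hg ?_⟩
  have : (i : ℕ) + 1 ≤ m - 1 := by have : (i : ℕ) ≠ m - 1 := fun h => hi (Fin.ext h); omega
  have := Nat.mul_le_mul_right g this
  rw [Nat.sub_one_mul] at this
  omega

theorem stmt_8 (n k r δ : ℕ) (hδ : 2 ≤ δ) (hr : 1 ≤ r) (hrk : r < k)
    (hkn : k ≤ n - ((n + (r + δ - 1) - 1) / (r + δ - 1)) * (δ - 1)) :
    ∃ q₀ : ℕ, ∀ (F : Type) [Field F] [Fintype F] [DecidableEq F],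
      q₀ ≤ Fintype.card F →
      ∃ d : ℕ, IsLinearLRC F n k d r δ ∧
        doptZ n k r δ - ((δ : ℤ) - 1) ≤ (d : ℤ) := by
  refine ⟨2 ^ n + 2, fun F _ _ _ hF => ?_⟩
  have hkt : k ≤ (k + r - 1) / r * r := by
    have := Nat.lt_div_mul_add (a := k + r - 1) hr; omega
  set t := (k + r - 1) / r
  obtain ⟨grp, i₀, hsize, hfull⟩ :=
    Fin.exists_partition_ceilDiv n (r + δ - 1) (by omega) (by omega)
  obtain ⟨pos⟩ : Nonempty (Fin n ↪ F) := Function.Embedding.nonempty_of_card_le (by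
    have := Nat.lt_two_pow_self (n := n)
    rw [Fintype.card_fin]; omega)
  obtain ⟨C, hCk, hCweight, hClocal⟩ := exists_lrc_of_partition grp pos pos.injective
    (r := r) (e := δ - 1) (t := t) i₀ (fun i => (hsize i).trans (by omega))
    (fun i hi => (hfull i hi).trans' (by omega)) (by simp only [Fintype.card_fin]; omega) hkt
    (by have := Nat.choose_le_two_pow n (k + t * (δ - 1)); rw [Fintype.card_fin]; omega)
  have hC : C ≠ ⊥ := fun h => by rw [h, finrank_bot] at hCk; omega
  obtain ⟨c, ⟨hcC, hc0⟩, hcmin⟩ :=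
    Set.exists_min_image {c | c ∈ C ∧ c ≠ 0} hammingNorm (Set.toFinite _)
      (Submodule.exists_mem_ne_zero_of_ne_bot hC)
  refine ⟨hammingNorm c, ⟨C, hCk, fun c' hc' hc'0 => hcmin c' ⟨hc', hc'0⟩,
    ⟨c, hcC, hc0, rfl⟩, fun j => ?_⟩, ?_⟩
  · obtain ⟨S, hjS, hS, hlocal⟩ := hClocal j
    exact ⟨S, hjS, by omega,
      fun c₁ hc₁ c₂ hc₂ hne => (hlocal c₁ hc₁ c₂ hc₂ hne).trans' (by omega)⟩
  · have := hCweight c hcC hc0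
    rw [Fintype.card_fin] at this
    zify [show 1 ≤ δ by omega] at this
    rw [doptZ]
    linarith
end

section
/- For every integer i ≥ 1 there exists an optimal vector-linear (n,k,d,r)-LRC over F_2^2 with parameters (n,k,d,r) = (4i+4, 3i+2, 3, 3); that is, there exists an F_2-linear subspace C ⊆ (F_2^2)^{4i+4} with |C| = 4^{3i+2}, minimum Hamming distance 3 over the alphabet F_2^2, all-symbol locality r = 3, and 3 = n − k − ⌈k/r⌉ + 2. -/
/-!
View the alphabet `𝔽₂²` as the field `𝔽₄`, split the `4(i+1)` coordinates into `i+1` groups of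
four, and label the positions inside each group by the four elements of `𝔽₄`. The code consists
of the words whose entries sum to zero in every group and satisfy `∑ (label j) · c j = 0`.

A group holding a nonzero entry holds at least two, which is locality `3`. A word of weight at
most two is therefore supported on two positions `a₀ ≠ a₁` of one group, with entries `x` and `-x`,
and the weighted check reads `(a₀ - a₁) x = 0`; hence the distance is at least `3`. It is exactly
`3` because placing the label itself on the nonzero positions of one group gives a codeword of
weight `3`: over `𝔽₄`, both `∑ a` and `∑ a²` vanish. Finally the `i + 2` checks are independent,
so the dimension is `4(i+1) - (i+2) = 3i + 2`.
-/

/-- A vector-linear `(n, k, d, r)`-LRC over the alphabet `𝔽₂² = ZMod 2 × ZMod 2`: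
an `𝔽₂`-linear subspace `C ⊆ (𝔽₂²)ⁿ` with `|C| = 4^k`, whose minimum Hamming distance
over the alphabet `𝔽₂²` is exactly `d`, and such that every coordinate `j` has a repair
set `S` with `j ∈ S`, `|S| ≤ r + 1`, for which the projection of `C` to the coordinates
in `S` has minimum Hamming distance at least `2`. -/
def IsVectorLinearLRC (n k d r : ℕ) : Prop :=
  ∃ C : Submodule (ZMod 2) (Fin n → ZMod 2 × ZMod 2),
    Nat.card ↥C = 4 ^ k ∧
    (∀ c ∈ C, c ≠ 0 → d ≤ hammingNorm c) ∧
    (∃ c ∈ C, c ≠ 0 ∧ hammingNorm c = d) ∧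
    (∀ j : Fin n, ∃ S : Finset (Fin n), j ∈ S ∧ S.card ≤ r + 1 ∧
      ∀ c ∈ C, ∀ c' ∈ C, (∃ i ∈ S, c i ≠ c' i) →
        2 ≤ (S.filter (fun i => c i ≠ c' i)).card)

open Finset

theorem Finset.exists_ne_ne_zero_of_sum_eq_zero {α M : Type*} [AddCommMonoid M] {s : Finset α}
    {f : α → M} (hs : ∑ x ∈ s, f x = 0) {a : α} (ha : a ∈ s) (hfa : f a ≠ 0) :
    ∃ b ∈ s, b ≠ a ∧ f b ≠ 0 := by
  by_contra! h
  exact hfa (by rw [← sum_eq_single_of_mem a ha h, hs])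

theorem Finset.one_lt_card_filter_ne_zero_of_sum_eq_zero {α M : Type*} [AddCommMonoid M]
    [DecidableEq M] {s : Finset α} {f : α → M} (hs : ∑ x ∈ s, f x = 0) (h : ∃ a ∈ s, f a ≠ 0) :
    1 < #{x ∈ s | f x ≠ 0} := by
  obtain ⟨a, ha, hfa⟩ := h
  obtain ⟨b, hb, hba, hfb⟩ := exists_ne_ne_zero_of_sum_eq_zero hs ha hfa
  exact one_lt_card.2 ⟨a, mem_filter.2 ⟨ha, hfa⟩, b, mem_filter.2 ⟨hb, hfb⟩, hba.symm⟩

theorem eq_zero_of_hammingNorm_le_two {ι β : Type*} [Fintype ι] [Zero β] [DecidableEq β]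
    {c : ι → β} (hc : hammingNorm c ≤ 2) {j₀ j₁ : ι} (h₀ : c j₀ ≠ 0) (h₁ : c j₁ ≠ 0)
    (hne : j₀ ≠ j₁) : ∀ j, j ≠ j₀ → j ≠ j₁ → c j = 0 := by
  classical
  intro j hj₀ hj₁
  by_contra h
  have hsub : ({j₀, j₁, j} : Finset ι) ⊆ ({i | c i ≠ 0} : Finset ι) := by
    intro i hi
    simp only [mem_insert, mem_singleton] at hi
    rcases hi with rfl | rfl | rfl <;> simpa
  have h3 := card_le_card hsub
  rw [card_eq_three.2 ⟨j₀, j₁, j, hne, hj₀.symm, hj₁.symm, rfl⟩] at h3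
  exact absurd (h3.trans hc) (by norm_num)

/-- For linear codes it suffices to bound weights instead of distances, and the alphabet `𝔽₂²`
may be replaced by any `𝔽₂`-linearly isomorphic one. -/
theorem isVectorLinearLRC_of_linearEquiv {V : Type*} [AddCommGroup V] [Module (ZMod 2) V]
    [DecidableEq V] (φ : V ≃ₗ[ZMod 2] ZMod 2 × ZMod 2) {n k d r : ℕ}
    (D : Submodule (ZMod 2) (Fin n → V)) (hcard : Nat.card D = 4 ^ k)
    (hmin : ∀ c ∈ D, c ≠ 0 → d ≤ hammingNorm c) (hwit : ∃ c ∈ D, c ≠ 0 ∧ hammingNorm c = d)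
    (hloc : ∀ j, ∃ S : Finset (Fin n), j ∈ S ∧ #S ≤ r + 1 ∧
      ∀ c ∈ D, (∃ i ∈ S, c i ≠ 0) → 2 ≤ #{i ∈ S | c i ≠ 0}) :
    IsVectorLinearLRC n k d r := by
  let Φ := (LinearEquiv.piCongrRight fun _ : Fin n => φ).toLinearMap
  have hΦ : Function.Injective Φ := LinearEquiv.injective _
  have hnorm (c : Fin n → V) : hammingNorm (Φ c) = hammingNorm c :=
    hammingNorm_comp (fun _ => φ) (fun _ => φ.injective) (fun _ => map_zero φ)
  have hne (c : Fin n → V) : Φ c ≠ 0 ↔ c ≠ 0 := hΦ.ne_iff' (map_zero Φ)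
  refine ⟨D.map Φ, ?_, ?_, ?_, fun j => ?_⟩
  · rw [← hcard]
    exact Nat.card_congr (Submodule.equivMapOfInjective Φ hΦ D).toEquiv.symm
  · rintro _ ⟨c, hc, rfl⟩ hc0
    rw [hnorm]
    exact hmin c hc ((hne c).1 hc0)
  · obtain ⟨c, hc, hc0, hcd⟩ := hwit
    exact ⟨Φ c, Submodule.mem_map_of_mem hc, (hne c).2 hc0, (hnorm c).trans hcd⟩
  · obtain ⟨S, hjS, hS, hrep⟩ := hloc j
    refine ⟨S, hjS, hS, ?_⟩
    rintro _ ⟨c, hc, rfl⟩ _ ⟨c', hc', rfl⟩ hdiff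
    have hiff (i : Fin n) : Φ c i ≠ Φ c' i ↔ (c - c') i ≠ 0 := by
      simp [Φ, sub_ne_zero]
    simp only [hiff] at hdiff ⊢
    exact hrep _ (D.sub_mem hc hc') hdiff

namespace LocalParityCode

variable {F ι κ : Type*} [Fintype F] (e : ι ≃ κ × F)

def group (g : κ) : Finset ι :=
  univ.map ⟨fun a => e.symm (g, a), e.symm.injective.comp (Prod.mk_right_injective g)⟩

variable {e} in
theorem card_group (g : κ) : #(group e g) = Fintype.card F := by
  simp [group]

variable {e} in
theorem mem_group_self (j : ι) : j ∈ group e (e j).1 :=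
  mem_map.2 ⟨(e j).2, mem_univ _, e.symm_apply_apply j⟩

variable [Field F] [Fintype ι]

def checkMap : (ι → F) →ₗ[F] (κ → F) × F :=
  (LinearMap.pi fun g => ∑ a : F, LinearMap.proj (e.symm (g, a))).prod
    (∑ j, (e j).2 • LinearMap.proj j)

def code : Submodule F (ι → F) := LinearMap.ker (checkMap e)

theorem checkMap_apply (c : ι → F) :
    checkMap e c = (fun g => ∑ a, c (e.symm (g, a)), ∑ j, (e j).2 * c j) := by
  ext <;> simp [checkMap]

variable {e}

theorem mem_code {c : ι → F} :
    c ∈ code e ↔ (∀ g, ∑ a, c (e.symm (g, a)) = 0) ∧ ∑ j, (e j).2 * c j = 0 := by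
  simp [code, checkMap_apply, funext_iff]

variable (e) in
theorem checkMap_surjective [Fintype κ] [Nonempty κ] : Function.Surjective (checkMap e) := by
  rintro ⟨t, s⟩
  obtain ⟨g₀⟩ := ‹Nonempty κ›
  classical
  -- `t` sits at label `0`, invisible to the weighted check; `s` sits at label `1` of `g₀`,
  -- balanced in its group at label `0`.
  let u : κ × F → F :=
    (fun p => if p.2 = 0 then t p.1 else 0) + Pi.single (g₀, 1) s - Pi.single (g₀, 0) s
  refine ⟨u ∘ e, ?_⟩
  simp only [checkMap_apply, Function.comp_apply, Equiv.apply_symm_apply, Prod.mk.injEq,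
    e.sum_comp (fun p => p.2 * u p)]
  refine ⟨funext fun g => ?_, ?_⟩
  · by_cases hg : g = g₀ <;> simp [u, Pi.single_apply, sum_add_distrib, hg]
  · have h0 (p : κ × F) : p.2 * (if p.2 = 0 then t p.1 else 0) = 0 := by
      split_ifs with h <;> simp [h]
    simp [u, Pi.single_apply, mul_add, mul_sub, h0]

variable (e) in
theorem card_code_mul [Fintype κ] [Nonempty κ] :
    Nat.card (code e) * Fintype.card F ^ (Fintype.card κ + 1) =
      Fintype.card F ^ Fintype.card ι := by
  have h := Submodule.card_eq_card_quotient_mul_card (code e)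
  rw [Nat.card_congr (show ((ι → F) ⧸ code e) ≃ₗ[F] (κ → F) × F from
    (checkMap e).quotKerEquivOfSurjective (checkMap_surjective e)).toEquiv] at h
  simpa [Nat.card_pi, Nat.card_prod, pow_succ, mul_assoc] using h.symm

theorem two_le_card_filter_ne_zero [DecidableEq F] {c : ι → F} (hc : c ∈ code e) {g : κ}
    (h : ∃ j ∈ group e g, c j ≠ 0) : 2 ≤ #{j ∈ group e g | c j ≠ 0} :=
  one_lt_card_filter_ne_zero_of_sum_eq_zero (by simpa [group] using (mem_code.1 hc).1 g) h

theorem three_le_hammingNorm [DecidableEq F] {c : ι → F} (hc : c ∈ code e) (hne : c ≠ 0) :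
    3 ≤ hammingNorm c := by
  by_contra! hlt
  obtain ⟨hgroup, hweighted⟩ := mem_code.1 hc
  obtain ⟨j₀, hj₀⟩ := Function.ne_iff.1 hne
  obtain ⟨⟨g, a₀⟩, rfl⟩ := e.symm.surjective j₀
  obtain ⟨a₁, -, ha, hj₁⟩ := exists_ne_ne_zero_of_sum_eq_zero (hgroup g) (mem_univ a₀) hj₀
  have hj : e.symm (g, a₁) ≠ e.symm (g, a₀) := by simpa using ha
  have hzero := eq_zero_of_hammingNorm_le_two (Nat.le_of_lt_succ hlt) hj₀ hj₁ hj.symm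
  have hsum : c (e.symm (g, a₀)) + c (e.symm (g, a₁)) = 0 := by
    rw [← hgroup g, Fintype.sum_eq_add a₀ a₁ (Ne.symm ha)]
    rintro a ⟨h₀, h₁⟩
    exact hzero _ (by simpa using h₀) (by simpa using h₁)
  have hsum' : a₀ * c (e.symm (g, a₀)) + a₁ * c (e.symm (g, a₁)) = 0 := by
    rw [← hweighted, Fintype.sum_eq_add _ _ hj.symm]
    · simp
    · rintro j ⟨h₀, h₁⟩
      rw [hzero j h₀ h₁, mul_zero]
  have hdiff : (a₀ - a₁) * c (e.symm (g, a₀)) = 0 := by linear_combination hsum' - a₁ * hsum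
  exact ha (sub_eq_zero.1 ((mul_eq_zero.1 hdiff).resolve_right hj₀)).symm

variable (e) in
theorem exists_mem_code_hammingNorm_eq [Fintype κ] [Nonempty κ] [DecidableEq κ]
    [DecidableEq F] (hF : 3 < Fintype.card F) :
    ∃ c ∈ code e, c ≠ 0 ∧ hammingNorm c = Fintype.card F - 1 := by
  obtain ⟨g₀⟩ := ‹Nonempty κ›
  let u : κ × F → F := fun p => if p.1 = g₀ then p.2 else 0
  have hsum : ∑ a : F, a = 0 := by
    simpa using FiniteField.sum_pow_lt_card_sub_one F 1 (by omega)
  have hsum_sq : ∑ a : F, a * a = 0 := by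
    simpa [sq] using FiniteField.sum_pow_lt_card_sub_one F 2 (by omega)
  have hnorm : hammingNorm (u ∘ e) = Fintype.card F - 1 := by
    have hsupp : ({p | u p ≠ 0} : Finset (κ × F)) = {g₀} ×ˢ univ.erase 0 := by
      ext ⟨g, a⟩
      by_cases hg : g = g₀ <;> simp [u, hg, eq_comm (a := g₀)]
    have hcomp : hammingNorm (u ∘ e) = hammingNorm u := card_equiv e (by simp)
    rw [hcomp, hammingNorm, hsupp, card_product, card_erase_of_mem (mem_univ 0)]
    simp
  refine ⟨u ∘ e, mem_code.2 ⟨fun g => ?_, ?_⟩, ?_, hnorm⟩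
  · by_cases hg : g = g₀ <;> simp [u, hg, hsum]
  · rw [show ∑ j, (e j).2 * (u ∘ e) j = ∑ j, (e j).2 * u (e j) from rfl,
      e.sum_comp (fun p => p.2 * u p), Fintype.sum_prod_type]
    simp [u, hsum_sq]
  · rw [← hammingNorm_pos_iff, hnorm]
    omega

end LocalParityCode

open LocalParityCode in
theorem stmt_11_general (i : ℕ) :
    IsVectorLinearLRC (4 * i + 4) (3 * i + 2) 3 3 ∧
      (3 : ℤ) = ((4 * i + 4 : ℕ) : ℤ) - ((3 * i + 2 : ℕ) : ℤ) - ((((3 * i + 2) + 3 - 1) / 3 : ℕ) : ℤ) + 2 := by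
  refine ⟨?_, by omega⟩
  let F := GaloisField 2 2
  let _ : Fintype F := Fintype.ofFinite F
  classical
  have hF : Fintype.card F = 4 := by
    rw [Fintype.card_eq_nat_card, GaloisField.card 2 2 two_ne_zero]
    norm_num
  let e : Fin (4 * i + 4) ≃ Fin (i + 1) × F := Fintype.equivOfCardEq (by simp [hF]; ring)
  let φ : F ≃ₗ[ZMod 2] ZMod 2 × ZMod 2 :=
    LinearEquiv.ofFinrankEq _ _ (by rw [GaloisField.finrank 2 two_ne_zero]; simp)
  refine isVectorLinearLRC_of_linearEquiv φ ((code e).restrictScalars (ZMod 2)) ?_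
    (fun c hc hne => three_le_hammingNorm hc hne)
    (by simpa [hF] using exists_mem_code_hammingNorm_eq e (by omega))
    (fun j => ⟨group e (e j).1, mem_group_self j, by rw [card_group, hF],
      fun c hc => two_le_card_filter_ne_zero hc⟩)
  have h := card_code_mul e
  rw [hF, Fintype.card_fin, Fintype.card_fin] at h
  exact Nat.eq_of_mul_eq_mul_right (by positivity) (h.trans (by rw [← pow_add]; ring_nf))

theorem stmt_11 (i : ℕ) (hi : 1 ≤ i) :
    IsVectorLinearLRC (4 * i + 4) (3 * i + 2) 3 3 ∧
      (3 : ℤ) = ((4 * i + 4 : ℕ) : ℤ) - ((3 * i + 2 : ℕ) : ℤ) - ((((3 * i + 2) + 3 - 1) / 3 : ℕ) : ℤ) + 2 :=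
  stmt_11_general i
end

section
/- For every integer i ≥ 1 there exists an optimal vector-linear (n,k,d,r)-LRC over F_2^2 with parameters (n,k,d,r) = (4i+4, 3i+1, 4, 3); that is, there exists an F_2-linear subspace C ⊆ (F_2^2)^{4i+4} with |C| = 4^{3i+1}, minimum Hamming distance 4 over the alphabet F_2^2, all-symbol locality r = 3, and 4 = n − k − ⌈k/r⌉ + 2. -/
/-!
Identify `𝔽₂²` with `𝔽₄ = 𝔽₂(α)`, `α² = α + 1`, and group the `4i + 4` coordinates into `i + 1`
blocks of four. The code is the image of an encoder that fills `i` information blocks with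
`(v₀, v₁, v₂, v₀ + v₁ + v₂)` and chooses the remaining block so that every codeword lies in the
kernel of the checks "each block sums to `0`" and `∑_g ⟨w, x_g⟩ = 0` for `w = (0, 1, α, α²)` and
`w = (0, 1, α², α)`. The block sums give locality `3` and show that a nonzero block has at least
two nonzero symbols. So a nonzero codeword of weight below `4` is supported on a single block,
which then lies in the kernel of the `3 × 4` matrix with rows `1, w₁, w₂`; any three of its
columns are independent, so the block is constant, of weight `4`.
-/

open Finset

section Blocks

variable {R M ι ι' κ : Type*} [AddCommMonoid M]

theorem two_le_hammingNorm_of_sum_eq_zero [Fintype κ] [DecidableEq M] {v : κ → M}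
    (hsum : ∑ q, v q = 0) (hv : v ≠ 0) : 2 ≤ hammingNorm v := by
  obtain ⟨p, hp⟩ := Function.ne_iff.mp hv
  obtain ⟨q, hqp, hq⟩ : ∃ q ≠ p, v q ≠ 0 := by
    by_contra! h
    exact hp (by rwa [sum_eq_single p (fun q _ => h q) (by simp)] at hsum)
  exact one_lt_card.mpr ⟨p, by simpa, q, by simpa, hqp.symm⟩

theorem hammingNorm_const [Fintype κ] [DecidableEq M] {a : M} (ha : a ≠ 0) :
    hammingNorm (fun _ : κ => a) = Fintype.card κ := by
  simp [hammingNorm, ha]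

theorem four_le_sum_hammingNorm_of_sum_eq_zero [Fintype ι] [DecidableEq M] {x : ι → Fin 4 → M}
    (hsum : ∀ g, ∑ q, x g q = 0)
    (hconst : ∀ g, (∀ g' ≠ g, x g' = 0) → ∃ a, x g = fun _ => a) (hx : x ≠ 0) :
    4 ≤ ∑ g, hammingNorm (x g) := by
  obtain ⟨g, hg⟩ := Function.ne_iff.mp hx
  by_cases hsingle : ∀ g' ≠ g, x g' = 0
  · obtain ⟨a, ha⟩ := hconst g hsingle
    have ha0 : a ≠ 0 := by rintro rfl; exact hg ha
    calc 4 = hammingNorm (x g) := by rw [ha, hammingNorm_const ha0, Fintype.card_fin]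
      _ ≤ _ := single_le_sum (f := fun g => hammingNorm (x g)) (by simp) (mem_univ g)
  · push Not at hsingle
    obtain ⟨g', hg'g, hg'⟩ := hsingle
    calc 4 ≤ hammingNorm (x g) + hammingNorm (x g') :=
          add_le_add (two_le_hammingNorm_of_sum_eq_zero (hsum g) hg)
            (two_le_hammingNorm_of_sum_eq_zero (hsum g') hg')
      _ ≤ _ := add_le_sum (f := fun g => hammingNorm (x g)) (by simp) (mem_univ g)
          (mem_univ g') hg'g.symm

variable (R M) in
def flatten [Semiring R] [Module R M] (e : ι' ≃ ι × κ) : (ι → κ → M) ≃ₗ[R] (ι' → M) :=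
  (LinearEquiv.curry R M ι κ).symm ≪≫ₗ LinearEquiv.funCongrLeft R M e

theorem flatten_apply [Semiring R] [Module R M] (e : ι' ≃ ι × κ) (x : ι → κ → M) (j : ι') :
    flatten R M e x j = x (e j).1 (e j).2 := rfl

theorem hammingNorm_flatten [Fintype ι] [Fintype κ] [Fintype ι'] [DecidableEq M] [Semiring R]
    [Module R M] (e : ι' ≃ ι × κ) (x : ι → κ → M) :
    hammingNorm (flatten R M e x) = ∑ g, hammingNorm (x g) := by
  simp only [hammingNorm, card_filter]
  exact (e.sum_comp fun p => if x p.1 p.2 ≠ 0 then 1 else 0).trans (Fintype.sum_prod_type _)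

def repairSet [Fintype κ] (e : ι' ≃ ι × κ) (j : ι') : Finset ι' :=
  univ.map ⟨fun q => e.symm ((e j).1, q), e.symm.injective.comp (Prod.mk_right_injective _)⟩

theorem mem_repairSet [Fintype κ] (e : ι' ≃ ι × κ) (j : ι') : j ∈ repairSet e j :=
  mem_map.mpr ⟨(e j).2, mem_univ _, by simp⟩

theorem card_repairSet [Fintype κ] (e : ι' ≃ ι × κ) (j : ι') :
    #(repairSet e j) = Fintype.card κ := by
  simp [repairSet]

theorem card_filter_repairSet [Fintype κ] [DecidableEq M] [Semiring R] [Module R M]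
    (e : ι' ≃ ι × κ) (x x' : ι → κ → M) (j : ι') :
    #((repairSet e j).filter fun l => flatten R M e x l ≠ flatten R M e x' l) =
      hammingDist (x (e j).1) (x' (e j).1) := by
  rw [repairSet, filter_map, card_map]
  simp [Function.comp_def, flatten_apply, hammingDist]

end Blocks

notation "𝔽₂²" => ZMod 2 × ZMod 2

theorem isVectorLinearLRC_of_blocks {n k d r : ℕ} {ι κ : Type*} [Fintype ι] [Fintype κ]
    (e : Fin n ≃ ι × κ) (hκ : Fintype.card κ ≤ r + 1) (C : Submodule (ZMod 2) (ι → κ → 𝔽₂²))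
    (hcard : Nat.card C = 4 ^ k) (hsum : ∀ x ∈ C, ∀ g, ∑ q, x g q = 0)
    (hdist : ∀ x ∈ C, x ≠ 0 → d ≤ ∑ g, hammingNorm (x g))
    (hwit : ∃ x ∈ C, x ≠ 0 ∧ ∑ g, hammingNorm (x g) = d) : IsVectorLinearLRC n k d r := by
  refine ⟨C.map (flatten (ZMod 2) 𝔽₂² e).toLinearMap, ?_, ?_, ?_, ?_⟩
  · rw [← hcard]
    exact Nat.card_congr ((flatten _ _ e).submoduleMap C).toEquiv.symm
  · rintro _ ⟨x, hx, rfl⟩ hx0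
    rw [LinearEquiv.coe_coe, hammingNorm_flatten]
    exact hdist x hx (by simpa using hx0)
  · obtain ⟨x, hx, hx0, hw⟩ := hwit
    refine ⟨_, ⟨x, hx, rfl⟩, by simpa using hx0, ?_⟩
    rw [LinearEquiv.coe_coe, hammingNorm_flatten, hw]
  · intro j
    refine ⟨repairSet e j, mem_repairSet e j, (card_repairSet e j).trans_le hκ, ?_⟩
    rintro _ ⟨x, hx, rfl⟩ _ ⟨x', hx', rfl⟩ ⟨l, hl, hne⟩
    simp only [LinearEquiv.coe_coe] at hne ⊢
    have hblock : x (e j).1 ≠ x' (e j).1 := by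
      rw [← hammingDist_pos, ← card_filter_repairSet (R := ZMod 2)]
      exact card_pos.mpr ⟨l, mem_filter.mpr ⟨hl, hne⟩⟩
    rw [card_filter_repairSet, hammingDist_eq_hammingNorm]
    refine two_le_hammingNorm_of_sum_eq_zero ?_ fun h => hblock (neg_add_eq_zero.mp h)
    simpa [neg_add_eq_sub] using hsum _ (sub_mem hx' hx) (e j).1

-- Multiplication by `α` in the basis `1, α`: `(a + bα)α = b + (a + b)α`.
def mulα : 𝔽₂² →ₗ[ZMod 2] 𝔽₂² where
  toFun x := (x.2, x.1 + x.2)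
  map_add' := by decide
  map_smul' := by decide

def check₁ (u : Fin 4 → 𝔽₂²) : 𝔽₂² := u 1 + mulα (u 2) + mulα (mulα (u 3))

def check₂ (u : Fin 4 → 𝔽₂²) : 𝔽₂² := u 1 + mulα (mulα (u 2)) + mulα (u 3)

theorem check₁_zero : check₁ 0 = 0 := by simp [check₁]
theorem check₂_zero : check₂ 0 = 0 := by simp [check₂]

set_option synthInstance.maxSize 1000 in
theorem eq_const_of_checks {u : Fin 4 → 𝔽₂²} (hsum : ∑ q, u q = 0) (h₁ : check₁ u = 0)
    (h₂ : check₂ u = 0) : u = fun _ => u 0 := by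
  have key : ∀ a b c d : 𝔽₂², a + b + c + d = 0 →
      b + mulα c + mulα (mulα d) = 0 → b + mulα (mulα c) + mulα d = 0 →
      b = a ∧ c = a ∧ d = a := by decide
  rw [Fin.sum_univ_four] at hsum
  obtain ⟨h1, h2, h3⟩ := key _ _ _ _ hsum h₁ h₂
  funext q
  fin_cases q <;> simp [h1, h2, h3]

def infoBlock (v : Fin 3 → 𝔽₂²) : Fin 4 → 𝔽₂² := ![v 0, v 1, v 2, v 0 + v 1 + v 2]

def specialBlock (t a b : 𝔽₂²) : Fin 4 → 𝔽₂² :=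
  ![t + a + b, t, t + mulα a + mulα (mulα b), t + mulα (mulα a) + mulα b]

theorem sum_infoBlock (v : Fin 3 → 𝔽₂²) : ∑ q, infoBlock v q = 0 := by
  simp [Fin.sum_univ_four, infoBlock, ZModModule.add_self]

theorem sum_specialBlock (t a b : 𝔽₂²) : ∑ q, specialBlock t a b q = 0 := by
  simp only [Fin.sum_univ_four, specialBlock]
  revert t a b; decide

theorem check₁_specialBlock (t a b : 𝔽₂²) : check₁ (specialBlock t a b) = a := by
  simp only [check₁, specialBlock]
  revert t a b; decide

theorem check₂_specialBlock (t a b : 𝔽₂²) : check₂ (specialBlock t a b) = b := by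
  simp only [check₂, specialBlock]
  revert t a b; decide

def SatisfiesParityChecks {ι : Type*} [Fintype ι] (x : ι → Fin 4 → 𝔽₂²) : Prop :=
  (∀ g, ∑ q, x g q = 0) ∧ ∑ g, check₁ (x g) = 0 ∧ ∑ g, check₂ (x g) = 0

theorem SatisfiesParityChecks.exists_const {ι : Type*} [Fintype ι] [DecidableEq ι]
    {x : ι → Fin 4 → 𝔽₂²} (hx : SatisfiesParityChecks x) {g : ι} (hg : ∀ g' ≠ g, x g' = 0) :
    ∃ a, x g = fun _ => a := by
  obtain ⟨hsum, h₁, h₂⟩ := hx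
  rw [sum_eq_single g (fun g' _ hg' => by rw [hg g' hg', check₁_zero]) (by simp)] at h₁
  rw [sum_eq_single g (fun g' _ hg' => by rw [hg g' hg', check₂_zero]) (by simp)] at h₂
  exact ⟨_, eq_const_of_checks (hsum g) h₁ h₂⟩

theorem SatisfiesParityChecks.four_le_sum_hammingNorm {ι : Type*} [Fintype ι] [DecidableEq ι]
    {x : ι → Fin 4 → 𝔽₂²} (hx : SatisfiesParityChecks x) (hx0 : x ≠ 0) :
    4 ≤ ∑ g, hammingNorm (x g) :=
  four_le_sum_hammingNorm_of_sum_eq_zero hx.1 (fun _ => hx.exists_const) hx0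

section Encoder

variable {i : ℕ}

-- Block `0` cancels the global checks of the information blocks `1, …, i`.
def encodeFun (m : (Fin i → Fin 3 → 𝔽₂²) × 𝔽₂²) : Fin (i + 1) → Fin 4 → 𝔽₂² :=
  Fin.cons (specialBlock m.2 (∑ g, check₁ (infoBlock (m.1 g))) (∑ g, check₂ (infoBlock (m.1 g))))
    fun g => infoBlock (m.1 g)

theorem encodeFun_add (m m' : (Fin i → Fin 3 → 𝔽₂²) × 𝔽₂²) :
    encodeFun (m + m') = encodeFun m + encodeFun m' := by
  funext g q
  refine Fin.cases ?_ (fun g => ?_) g <;> fin_cases q <;>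
    simp only [encodeFun, specialBlock, infoBlock, check₁, check₂, Fin.cons_zero, Fin.cons_succ,
      Prod.fst_add, Prod.snd_add, Pi.add_apply, map_add, map_sum, sum_add_distrib,
      Matrix.cons_val_zero, Matrix.cons_val_one, Matrix.cons_val, Fin.isValue, Fin.zero_eta,
      Fin.mk_one, Fin.reduceFinMk] <;> abel

variable (i) in
def encode : ((Fin i → Fin 3 → 𝔽₂²) × 𝔽₂²) →ₗ[ZMod 2] (Fin (i + 1) → Fin 4 → 𝔽₂²) :=
  (AddMonoidHom.mk' encodeFun encodeFun_add).toZModLinearMap 2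

theorem encode_zero (m : (Fin i → Fin 3 → 𝔽₂²) × 𝔽₂²) :
    encode i m 0 = specialBlock m.2 (∑ g, check₁ (infoBlock (m.1 g)))
      (∑ g, check₂ (infoBlock (m.1 g))) := rfl

theorem encode_succ (m : (Fin i → Fin 3 → 𝔽₂²) × 𝔽₂²) (g : Fin i) :
    encode i m g.succ = infoBlock (m.1 g) := rfl

theorem satisfiesParityChecks_encode (m : (Fin i → Fin 3 → 𝔽₂²) × 𝔽₂²) :
    SatisfiesParityChecks (encode i m) := by
  refine ⟨fun g => ?_, ?_, ?_⟩
  · cases g using Fin.cases with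
    | zero => rw [encode_zero, sum_specialBlock]
    | succ g => rw [encode_succ, sum_infoBlock]
  all_goals simp only [Fin.sum_univ_succ, encode_zero, encode_succ, check₁_specialBlock,
    check₂_specialBlock, ZModModule.add_self]

theorem encode_injective : Function.Injective (encode i) := by
  intro m m' h
  have hblock (g) : infoBlock (m.1 g) = infoBlock (m'.1 g) := by
    rw [← encode_succ, ← encode_succ, h]
  refine Prod.ext (funext fun g => funext fun j => ?_) (congrFun (congrFun h 0) 1)
  have := congrFun (hblock g) j.castSucc
  fin_cases j <;> exact this

theorem card_range_encode : Nat.card (LinearMap.range (encode i)) = 4 ^ (3 * i + 1) := by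
  rw [← Nat.card_congr (LinearEquiv.ofInjective _ encode_injective).toEquiv]
  simp [Nat.card_eq_fintype_card, pow_succ, pow_mul]

theorem sum_hammingNorm_encode_zero_mk (t : 𝔽₂²) (ht : t ≠ 0) :
    ∑ g, hammingNorm (encode i (0, t) g) = 4 := by
  have hinfo : infoBlock 0 = 0 := by funext q; fin_cases q <;> simp [infoBlock]
  have hspecial : specialBlock t 0 0 = fun _ => t := by
    funext q; fin_cases q <;> simp [specialBlock]
  simp only [Fin.sum_univ_succ, encode_zero, encode_succ, Pi.zero_apply, hinfo,
    check₁_zero, check₂_zero, sum_const_zero, hspecial, hammingNorm_const ht, hammingNorm_zero, Fintype.card_fin, add_zero]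

end Encoder

theorem stmt_12_general (i : ℕ) :
    IsVectorLinearLRC (4 * i + 4) (3 * i + 1) 4 3 ∧
      (4 : ℤ) = ((4 * i + 4 : ℕ) : ℤ) - ((3 * i + 1 : ℕ) : ℤ) - ((((3 * i + 1) + 3 - 1) / 3 : ℕ) : ℤ) + 2 := by
  have hweight := sum_hammingNorm_encode_zero_mk (i := i) (1, 0) (by decide)
  refine ⟨isVectorLinearLRC_of_blocks ((finCongr (by ring)).trans finProdFinEquiv.symm)
    (Fintype.card_fin 4).le (LinearMap.range (encode i)) card_range_encode ?_ ?_ ?_, by omega⟩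
  · rintro _ ⟨m, rfl⟩
    exact (satisfiesParityChecks_encode m).1
  · rintro _ ⟨m, rfl⟩
    exact (satisfiesParityChecks_encode m).four_le_sum_hammingNorm
  · exact ⟨_, ⟨_, rfl⟩, fun h => by simp [h] at hweight, hweight⟩

theorem stmt_12 (i : ℕ) (hi : 1 ≤ i) :
    IsVectorLinearLRC (4 * i + 4) (3 * i + 1) 4 3 ∧
      (4 : ℤ) = ((4 * i + 4 : ℕ) : ℤ) - ((3 * i + 1 : ℕ) : ℤ) - ((((3 * i + 1) + 3 - 1) / 3 : ℕ) : ℤ) + 2 :=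
  stmt_12_general i
end

section
/- Let δ ≥ 2, let G be a k×s matrix over F_q of rank t = s − δ + 1 ≥ 1, and suppose that every set of t columns of G spans the column space of G. Then the first t columns x_1, …, x_t of G are linearly independent and there exists a t×(δ−1) matrix B over F_q, every square submatrix of which is invertible, such that G = (x_1|…|x_t)·(I_t | B), where I_t is the t×t identity matrix. -/
/-!
Since any `t` columns of `G` span its `t`-dimensional column space, any `t` distinct columns are
linearly independent; in particular the first `t` columns form a basis, and `B` records the
coordinates of the remaining `δ - 1` columns in it. If a square submatrix `B[ρ, σ]` were singular,
a kernel vector would combine the columns indexed by `σ` into a vector lying in the span of the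
first columns outside `ρ`: a linear relation among `t` distinct columns of `G`.
-/

open Matrix Function Module Set Submodule

section SpanningFamilies

variable {K V ι κ : Type*} [DivisionRing K] [AddCommGroup V] [Module K V] [Fintype κ]

theorem span_range_comp_eq_of_forall_card_eq {v : ι → V} {t : ℕ}
    (hspan : ∀ T : Finset ι, T.card = t → span K (v '' T) = span K (range v))
    {f : κ → ι} (hf : Injective f) (hκ : Fintype.card κ = t) :
    span K (range (v ∘ f)) = span K (range v) := by
  have := hspan (Finset.univ.map ⟨f, hf⟩) (by simpa using hκ)
  rwa [Finset.coe_map, Finset.coe_univ, image_univ, Embedding.coeFn_mk, ← range_comp] at this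

theorem linearIndependent_comp_of_forall_card_eq {v : ι → V} {t : ℕ}
    (hspan : ∀ T : Finset ι, T.card = t → span K (v '' T) = span K (range v))
    (hrank : finrank K (span K (range v)) = t)
    {f : κ → ι} (hf : Injective f) (hκ : Fintype.card κ = t) :
    LinearIndependent K (v ∘ f) := by
  rw [linearIndependent_iff_card_eq_finrank_span, Set.finrank,
    span_range_comp_eq_of_forall_card_eq hspan hf hκ, hrank, hκ]

end SpanningFamilies

section Superregular

variable {K V : Type*} [Field K] [AddCommGroup V] [Module K V]

theorem isUnit_submatrix_of_linearIndependent_sumElim {κ ν μ : Type*} [Fintype κ] [Fintype μ]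
    [DecidableEq μ] {b : κ → V} {w : ν → V} {B : Matrix κ ν K}
    (hw : ∀ j, ∑ i, B i j • b i = w j) {ρ : μ → κ} {σ : μ → ν}
    (hli : LinearIndependent K (Sum.elim (fun i : ↥(range ρ)ᶜ => b i) (w ∘ σ))) :
    IsUnit (B.submatrix ρ σ) := by
  obtain ⟨-, hwσ, hdisj⟩ := linearIndependent_sum.1 hli
  rw [isUnit_iff_isUnit_det, isUnit_iff_ne_zero]
  intro hdet
  obtain ⟨x, hx0, hx⟩ := exists_mulVec_eq_zero_iff.2 hdet
  set y := ∑ j, x j • w (σ j)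
  have hy : y = ∑ i, (B.submatrix id σ *ᵥ x) i • b i := by
    simp only [y, ← hw, Finset.smul_sum, smul_smul, mulVec, dotProduct, submatrix_apply, id,
      Finset.sum_smul]
    rw [Finset.sum_comm]
    simp only [mul_comm]
  have hy_left : y ∈ span K (range (Sum.elim (fun i : ↥(range ρ)ᶜ => b i) (w ∘ σ) ∘ Sum.inl)) := by
    rw [hy]
    refine sum_mem fun i _ => ?_
    by_cases hi : i ∈ range ρ
    · obtain ⟨a, rfl⟩ := hi
      have hρa : (B.submatrix id σ *ᵥ x) (ρ a) = 0 := congrFun hx a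
      rw [hρa, zero_smul]
      exact zero_mem _
    · exact smul_mem _ _ (subset_span ⟨⟨i, hi⟩, rfl⟩)
  have hy_right : y ∈ span K (range (Sum.elim (fun i : ↥(range ρ)ᶜ => b i) (w ∘ σ) ∘ Sum.inr)) :=
    sum_mem fun j _ => smul_mem _ _ (subset_span ⟨j, rfl⟩)
  have hy0 : y = 0 := disjoint_def.1 hdisj y hy_left hy_right
  exact hx0 (funext (Fintype.linearIndependent_iff.1 hwσ x hy0))

universe u

theorem isUnit_submatrix_of_forall_linearIndependent {κ ν : Type u} [Fintype κ] {u : κ ⊕ ν → V}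
    {B : Matrix κ ν K} (hu : ∀ j, ∑ i, B i j • u (.inl i) = u (.inr j))
    (hli : ∀ (ι : Type u) [Fintype ι] (f : ι → κ ⊕ ν), Injective f →
      Fintype.card ι = Fintype.card κ → LinearIndependent K (u ∘ f))
    {m : ℕ} {ρ : Fin m → κ} {σ : Fin m → ν} (hρ : Injective ρ) (hσ : Injective σ) :
    IsUnit (B.submatrix ρ σ) := by
  classical
  have hm : m ≤ Fintype.card κ := by simpa using Fintype.card_le_of_injective ρ hρ
  have hcard : Fintype.card (↥(range ρ)ᶜ ⊕ Fin m) = Fintype.card κ := by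
    rw [Fintype.card_sum, Fintype.card_compl_set, Set.card_range_of_injective hρ,
      Fintype.card_fin, Nat.sub_add_cancel hm]
  have := hli _ (Sum.map Subtype.val σ) (Sum.map_injective.2 ⟨Subtype.val_injective, hσ⟩) hcard
  refine isUnit_submatrix_of_linearIndependent_sumElim hu ?_
  convert this using 1
  ext (i | j) <;> rfl

end Superregular

theorem Matrix.eq_mul_of_forall_transpose_eq_sum {m n p R : Type*} [Fintype n] [CommSemiring R]
    {M : Matrix m n R} {N : Matrix m p R} {B : Matrix n p R}
    (h : ∀ j, ∑ i, B i j • Mᵀ i = Nᵀ j) : N = M * B := by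
  ext a j
  simpa [mul_apply, Finset.sum_apply, mul_comm] using (congrFun (h j) a).symm

theorem stmt_13 (F : Type) [Field F]
    (k s t δ : ℕ) (hδ : 2 ≤ δ) (hst : s + 1 = t + δ)
    (G : Matrix (Fin k) (Fin s) F)
    (hrank : G.rank = t)
    (hspan : ∀ T : Finset (Fin s), T.card = t →
      Submodule.span F (Set.image (fun j => G.transpose j) (T : Set (Fin s))) =
        Submodule.span F (Set.range fun j => G.transpose j)) :
    LinearIndependent F (fun j : Fin t => G.transpose (Fin.castLE (by omega) j)) ∧
    ∃ B : Matrix (Fin t) (Fin (δ - 1)) F,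
      (∀ (m : ℕ) (ρ : Fin m → Fin t) (σ : Fin m → Fin (δ - 1)),
        Function.Injective ρ → Function.Injective σ → IsUnit (B.submatrix ρ σ)) ∧
      G.submatrix id (Fin.cast (by omega : t + (δ - 1) = s) ∘ finSumFinEquiv) =
        (G.submatrix id (Fin.castLE (by omega : t ≤ s))) * Matrix.fromCols 1 B := by
  let col : Fin t ⊕ Fin (δ - 1) ≃ Fin s := finSumFinEquiv.trans (finCongr (by omega))
  have hrank' : finrank F (span F (range Gᵀ)) = t := by
    rw [← hrank, rank_eq_finrank_span_cols]
    rfl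
  have hli {ι : Type} [Fintype ι] {f : ι → Fin s} (hf : Injective f)
      (hι : Fintype.card ι = t) : LinearIndependent F (Gᵀ ∘ f) :=
    linearIndependent_comp_of_forall_card_eq hspan hrank' hf hι
  have hmem (j : Fin (δ - 1)) : Gᵀ (col (.inr j)) ∈ span F (range (Gᵀ ∘ col ∘ .inl)) := by
    rw [span_range_comp_eq_of_forall_card_eq hspan (col.injective.comp Sum.inl_injective)
      (Fintype.card_fin t)]
    exact subset_span (mem_range_self _)
  choose C hC using fun j => (mem_span_range_iff_exists_fun F).1 (hmem j)
  let B : Matrix (Fin t) (Fin (δ - 1)) F := of fun i j => C j i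
  have hlater : G.submatrix id (col ∘ .inr) = G.submatrix id (Fin.castLE (by omega)) * B :=
    eq_mul_of_forall_transpose_eq_sum hC
  refine ⟨hli (Fin.castLE_injective _) (Fintype.card_fin t), B, ?_, ?_⟩
  · intro m ρ σ hρ hσ
    refine isUnit_submatrix_of_forall_linearIndependent (u := Gᵀ ∘ col) hC ?_ hρ hσ
    intro ι _ f hf hι
    exact hli (col.injective.comp hf) (hι.trans (Fintype.card_fin t))
  · rw [mul_fromCols, Matrix.mul_one]
    ext a (i | j)
    · rfl
    · exact congrFun (congrFun hlater a) j
end
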